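/- arXiv:1901.00998 — 5 statements merged into one kernel-verified Lean document; each statement's English description precedes it below -/
import Mathlib

section
/- Let z be a unit of ℤ/2ⁿℤ and a = (a₁, …, a_{2ν+2}) ∈ (ℤ/2ⁿℤ)^{2ν+2} with some coordinate a unit. If a₁a_{ν+1} + ⋯ + a_ν a_{2ν} + z·a_{2ν+1}² + a_{2ν+1}a_{2ν+2} + z·a_{2ν+2}² = 0, then a_i is a unit for some i ∈ {1, …, 2ν}. -/
/-! Reduce modulo 2. If none of `a₁, …, a_{2ν}` is a unit, they all vanish in `ZMod 2`, so the
isotropy equation becomes `b² + bc + c² = 0` there for the last two coordinates `b, c`; this form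
has no nontrivial zero over `ZMod 2`, so `b` and `c` are non-units as well and no coordinate
of `a` is a unit. -/

open Matrix

theorem ZMod.isUnit_iff_castHom_ne_zero {p d : ℕ} (hp : p.Prime) (hd : 0 < d)
    (x : ZMod (p ^ d)) :
    IsUnit x ↔ ZMod.castHom (dvd_pow_self p hd.ne') (ZMod p) x ≠ 0 := by
  have : NeZero (p ^ d) := ⟨pow_ne_zero d hp.ne_zero⟩
  rw [← ZMod.natCast_zmod_val x, map_natCast, ZMod.isUnit_natCast_iff_not_dvd_pow hp hd, ne_eq,
    ZMod.natCast_eq_zero_iff]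

theorem ZMod.eq_zero_and_eq_zero_of_mul_sq_add_mul_add_mul_sq_eq_zero {z b c : ZMod 2} (hz : z ≠ 0)
    (h : z * b ^ 2 + b * c + z * c ^ 2 = 0) : b = 0 ∧ c = 0 := by
  revert z b c; decide

theorem delta_two_isotropic_unit_coord (n ν : ℕ) (hn : 0 < n)
    (z : ZMod (2^n)) (hz : IsUnit z)
    (a : Fin (2*ν+2) → ZMod (2^n)) (ha : ∃ i, IsUnit (a i))
    (hiso : (∑ i : Fin ν, a ⟨i.val, by have := i.isLt; omega⟩ *
        a ⟨i.val + ν, by have := i.isLt; omega⟩)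
      + z * a ⟨2*ν, by omega⟩ ^ 2 + a ⟨2*ν, by omega⟩ * a ⟨2*ν+1, by omega⟩
      + z * a ⟨2*ν+1, by omega⟩ ^ 2 = 0) :
    ∃ i : Fin (2*ν+2), i.val < 2*ν ∧ IsUnit (a i) := by
  set φ := ZMod.castHom (dvd_pow_self 2 hn.ne') (ZMod 2)
  have hunit (x : ZMod (2 ^ n)) : IsUnit x ↔ φ x ≠ 0 :=
    ZMod.isUnit_iff_castHom_ne_zero Nat.prime_two hn x
  by_contra! hcon
  have hred_zero (i : Fin (2*ν+2)) (hi : i.val < 2*ν) : φ (a i) = 0 :=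
    not_ne_iff.mp <| mt (hunit _).mpr (hcon i hi)
  have hsum : φ (∑ i : Fin ν, a ⟨i.val, by have := i.isLt; omega⟩ *
      a ⟨i.val + ν, by have := i.isLt; omega⟩) = 0 := by
    rw [map_sum]
    exact Finset.sum_eq_zero fun i _ => by rw [map_mul, hred_zero _ (by simp; omega), zero_mul]
  have hred := congrArg φ hiso
  simp only [map_add, map_mul, map_pow, hsum, zero_add, map_zero] at hred
  obtain ⟨hb, hc⟩ := ZMod.eq_zero_and_eq_zero_of_mul_sq_add_mul_add_mul_sq_eq_zero
    ((hunit z).mp hz) hred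
  obtain ⟨i, hi⟩ := ha
  refine (hunit _).mp hi ?_
  obtain hlt | rfl | rfl : i.val < 2*ν ∨ i = ⟨2*ν, by omega⟩ ∨ i = ⟨2*ν+1, by omega⟩ := by
    simp only [Fin.ext_iff]; omega
  exacts [hred_zero i hlt, hb, hc]
end

section
/- Let a ∈ (ℤ/2ⁿℤ)^{2ν+δ} with a·G·aᵗ = 0 and with a_j a unit for some j ∈ {1,…,2ν}. Then the number of equivalence classes [a + m], with m ranging over (2·ℤ/2ⁿℤ)^{2ν+δ} such that (a+m)·G·(a+m)ᵗ = 0, equals 2^{(n-1)(2ν+δ-2)}, where [·] denotes the class under scaling by units of ℤ/2ⁿℤ. -/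
namespace Ortho
open Matrix

abbrev Vec (n ν δ : ℕ) := Fin (2*ν+δ) → ZMod (2^n)

/-- The orthogonal form matrix `G_{2ν+δ,Δ}`. -/
def Gmat (n ν δ : ℕ) (z : ZMod (2^n)) : Matrix (Fin (2*ν+δ)) (Fin (2*ν+δ)) (ZMod (2^n)) :=
  Matrix.of fun i j =>
    if i.val < ν ∧ j.val = i.val + ν then 1
    else if 2*ν ≤ i.val ∧ i.val = j.val then (if δ = 2 then z else 1)
    else if i.val = 2*ν ∧ j.val = 2*ν+1 then 1
    else 0

/-- Representatives of vertices: vectors with a unit coordinate that are isotropic. -/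
abbrev VertexRep (n ν δ : ℕ) (z : ZMod (2^n)) :=
  {a : Vec n ν δ // (∃ i, IsUnit (a i)) ∧ a ⬝ᵥ (Gmat n ν δ z).mulVec a = 0}

instance vsetoid (n ν δ : ℕ) (z : ZMod (2^n)) : Setoid (VertexRep n ν δ z) where
  r a b := ∃ u : (ZMod (2^n))ˣ, (a : Vec n ν δ) = (u : ZMod (2^n)) • (b : Vec n ν δ)
  iseqv := by
    constructor
    · intro a; exact ⟨1, by simp⟩
    · rintro a b ⟨u, h⟩
      exact ⟨u⁻¹, by rw [h, smul_smul, Units.inv_mul, one_smul]⟩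
    · rintro a b c ⟨u, h1⟩ ⟨v, h2⟩
      exact ⟨u * v, by rw [h1, h2, smul_smul, Units.val_mul]⟩

/-- Vertices of the orthogonal graph: classes of vectors under unit scaling. -/
def Vertex (n ν δ : ℕ) (z : ZMod (2^n)) := Quotient (vsetoid n ν δ z)

def adjAux (n ν δ : ℕ) (z : ZMod (2^n)) (A B : Vertex n ν δ z) : Prop :=
  ∃ a b : VertexRep n ν δ z, (⟦a⟧ : Vertex n ν δ z) = A ∧ (⟦b⟧ : Vertex n ν δ z) = B ∧
    IsUnit ((a : Vec n ν δ) ⬝ᵥ (Gmat n ν δ z + (Gmat n ν δ z)ᵀ).mulVec (b : Vec n ν δ))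

/-- The orthogonal graph modulo `2^n`. -/
def OGraph (n ν δ : ℕ) (z : ZMod (2^n)) : SimpleGraph (Vertex n ν δ z) where
  Adj A B := A ≠ B ∧ (adjAux n ν δ z A B ∨ adjAux n ν δ z B A)
  symm := ⟨by rintro A B ⟨h1, h2⟩; exact ⟨Ne.symm h1, Or.symm h2⟩⟩
  loopless := ⟨by rintro A ⟨h, -⟩; exact h rfl⟩

end Ortho

/-!
Fix a coordinate `j < 2ν` at which `a` is a unit, and let `k = j ± ν` be its hyperbolic partner:
changing the `k`-th coordinate of `c` by `t` changes `Q(c) = c ⬝ G c` by `t * c j`. Hence an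
isotropic lift is determined by its coordinates off `k`, and every `c ≡ a (mod 2)` can be
corrected at `k` to an isotropic lift, because `Q(c) ≡ Q(a) = 0 (mod 2)` and `c j` is a unit.
Every unit of `ℤ/2ⁿℤ` is `≡ 1 (mod 2)`, so each class of lifts contains exactly one lift with
`j`-th coordinate `a j`. The classes are therefore parametrised by the remaining `2ν+δ-2`
coordinates, each ranging over a coset of `2ℤ/2ⁿℤ`, which has `2ⁿ⁻¹` elements.
-/

theorem ZMod.card_dvd_sub {m d : ℕ} [NeZero m] (hd : d ∣ m) (c : ZMod m) :
    Nat.card {x : ZMod m // (d : ZMod m) ∣ x - c} = m / d := by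
  have hmem (x : ZMod m) : x ∈ AddSubgroup.zmultiples (d : ZMod m) ↔ (d : ZMod m) ∣ x := by
    constructor
    · rintro ⟨k, rfl⟩
      exact ⟨k, by simp [mul_comm]⟩
    · rintro ⟨y, rfl⟩
      exact ⟨(y.cast : ℤ), by simp [mul_comm]⟩
  calc Nat.card {x : ZMod m // (d : ZMod m) ∣ x - c}
      = Nat.card (AddSubgroup.zmultiples (d : ZMod m)) :=
        Nat.card_congr ((Equiv.subRight c).subtypeEquiv fun x => (hmem (x - c)).symm)
    _ = m / d := by
        rw [Nat.card_zmultiples, ZMod.addOrderOf_coe _ (NeZero.ne m), Nat.gcd_eq_right hd]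

theorem ZMod.two_dvd_sub_one_of_isUnit {m : ℕ} [NeZero m] (hm : 2 ∣ m) {u : ZMod m}
    (hu : IsUnit u) : 2 ∣ u - 1 := by
  have hcop := ZMod.val_coe_unit_coprime hu.unit
  rw [hu.unit_spec] at hcop
  obtain ⟨k, hk⟩ := Nat.coprime_two_right.mp (hcop.coprime_dvd_right hm)
  exact ⟨k, by rw [← ZMod.natCast_zmod_val u, hk]; push_cast; ring⟩

theorem ZMod.isNilpotent_natCast_pow_self (p n : ℕ) : IsNilpotent (p : ZMod (p ^ n)) :=
  ⟨n, by rw [← Nat.cast_pow, ZMod.natCast_self]⟩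

theorem isUnit_of_dvd_sub {R : Type*} [CommRing R] {p x y : R} (hp : IsNilpotent p)
    (hxy : p ∣ x - y) (hy : IsUnit y) : IsUnit x := by
  obtain ⟨r, hr⟩ := hxy
  have hnil : IsNilpotent (x - y) := hr ▸ (Commute.all p r).isNilpotent_mul_right hp
  simpa using hnil.isUnit_add_right_of_commute hy (Commute.all _ _)

section IsotropicLifts

open Matrix Function

variable {R ι : Type*} [CommRing R] [Fintype ι]

theorem Matrix.dvd_dotProduct_mulVec_sub (G : Matrix ι ι R) {p : R} {a b : ι → R}
    (hab : ∀ i, p ∣ b i - a i) : p ∣ b ⬝ᵥ G *ᵥ b - a ⬝ᵥ G *ᵥ a := by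
  have hsplit : b ⬝ᵥ G *ᵥ b - a ⬝ᵥ G *ᵥ a = (b - a) ⬝ᵥ G *ᵥ b + a ⬝ᵥ G *ᵥ (b - a) := by
    simp only [sub_dotProduct, mulVec_sub, dotProduct_sub]; ring
  rw [hsplit, dotProduct_mulVec a G]
  exact dvd_add (Finset.dvd_sum fun i _ => dvd_mul_of_dvd_left (hab i) _)
    (Finset.dvd_sum fun i _ => dvd_mul_of_dvd_right (by simpa using hab i) _)

variable [DecidableEq ι]

theorem Matrix.dotProduct_mulVec_update (G : Matrix ι ι R) (c : ι → R) (k : ι) (t : R) :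
    update c k t ⬝ᵥ G *ᵥ update c k t =
      c ⬝ᵥ G *ᵥ c + (t - c k) * ((G + Gᵀ) *ᵥ c) k + (t - c k) ^ 2 * G k k := by
  have hupd : update c k t = c + Pi.single k (t - c k) := by
    ext i
    by_cases hik : i = k <;> simp [hik]
  rw [hupd]
  have hpolar : ((G + Gᵀ) *ᵥ c) k = (G *ᵥ c) k + c ⬝ᵥ G.col k := by
    rw [add_mulVec, mulVec_transpose]; rfl
  simp only [mulVec_add, mulVec_single, MulOpposite.op_sub, dotProduct_add, add_dotProduct,
    single_dotProduct, dotProduct_smul, col_apply, smul_add, MulOpposite.smul_eq_mul_unop,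
    MulOpposite.unop_sub, MulOpposite.unop_op, hpolar]
  ring

/-- The basis vector `e k` is isotropic for `G`, and its polar pairing picks out the `j`-th
coordinate. -/
structure Matrix.IsHyperbolicPartner (G : Matrix ι ι R) (j k : ι) : Prop where
  diag_eq_zero : G k k = 0
  polar_mulVec_apply : ∀ c : ι → R, ((G + Gᵀ) *ᵥ c) k = c j

namespace Matrix.IsHyperbolicPartner

variable {G : Matrix ι ι R} {j k : ι}

theorem dotProduct_mulVec_update (h : G.IsHyperbolicPartner j k) (c : ι → R) (t : R) :
    update c k t ⬝ᵥ G *ᵥ update c k t = c ⬝ᵥ G *ᵥ c + (t - c k) * c j := by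
  rw [G.dotProduct_mulVec_update, h.polar_mulVec_apply, h.diag_eq_zero]
  ring

theorem eq_of_forall_ne (h : G.IsHyperbolicPartner j k) {b b' : ι → R}
    (hb : b ⬝ᵥ G *ᵥ b = 0) (hb' : b' ⬝ᵥ G *ᵥ b' = 0) (hb'j : IsUnit (b' j))
    (hoff : ∀ i, i ≠ k → b i = b' i) : b = b' := by
  have hupd : b = update b' k (b k) := eq_update_iff.mpr ⟨rfl, hoff⟩
  have hQ := h.dotProduct_mulVec_update b' (b k)
  rw [← hupd, hb, hb', zero_add, eq_comm, hb'j.mul_left_eq_zero, sub_eq_zero] at hQ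
  rw [hupd, hQ, update_eq_self]

theorem exists_dvd_sub_update (h : G.IsHyperbolicPartner j k) {p : R} {c : ι → R}
    (hcj : IsUnit (c j)) (hp : p ∣ c ⬝ᵥ G *ᵥ c) :
    ∃ t, p ∣ t - c k ∧ update c k t ⬝ᵥ G *ᵥ update c k t = 0 := by
  refine ⟨c k - Ring.inverse (c j) * (c ⬝ᵥ G *ᵥ c), ?_, ?_⟩
  · rw [sub_sub_cancel_left]
    exact (dvd_mul_of_dvd_right hp _).neg_right
  · rw [h.dotProduct_mulVec_update, sub_sub_cancel_left, neg_mul, mul_right_comm,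
      Ring.inverse_mul_cancel _ hcj, one_mul, add_neg_cancel]

theorem card_isotropicLifts (h : G.IsHyperbolicPartner j k) (hjk : j ≠ k) {p : R} {a : ι → R}
    (ha : a ⬝ᵥ G *ᵥ a = 0) (hja : IsUnit (a j)) :
    Nat.card {b : ι → R // b ⬝ᵥ G *ᵥ b = 0 ∧ (∀ i, p ∣ b i - a i) ∧ b j = a j} =
      Nat.card (∀ i : {i // i ∉ ({j, k} : Finset ι)}, {x : R // p ∣ x - a i}) := by
  refine Nat.card_eq_of_bijective (fun b i => ⟨b.1 i, b.2.2.1 i⟩) ⟨?_, fun f => ?_⟩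
  · rintro ⟨b, hb, _, hbj⟩ ⟨b', hb', _, hb'j⟩ hbb'
    have hb'u : IsUnit (b' j) := by rwa [hb'j]
    refine Subtype.ext (h.eq_of_forall_ne hb hb' hb'u fun i hik => ?_)
    by_cases hij : i = j
    · subst hij
      exact hbj.trans hb'j.symm
    · exact congrArg Subtype.val (congrFun hbb' ⟨i, by simp [hij, hik]⟩)
  let c : ι → R := fun i => if hi : i ∉ ({j, k} : Finset ι) then f ⟨i, hi⟩ else a i
  have hca (i : ι) : p ∣ c i - a i := by
    by_cases hi : i ∉ ({j, k} : Finset ι)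
    · simpa only [c, dif_pos hi] using (f ⟨i, hi⟩).2
    · simp only [c, dif_neg hi, sub_self, dvd_zero]
  have hcj : c j = a j := by simp [c]
  obtain ⟨t, htc, ht⟩ := h.exists_dvd_sub_update (hcj ▸ hja)
    (by simpa [ha] using G.dvd_dotProduct_mulVec_sub hca)
  refine ⟨⟨update c k t, ht, fun i => ?_, by rw [update_of_ne hjk, hcj]⟩,
    funext fun i => Subtype.ext ?_⟩
  · rcases eq_or_ne i k with rfl | hik
    · simpa using dvd_add htc (hca i)
    · rw [update_of_ne hik]
      exact hca i
  · have hik : (i : ι) ≠ k := fun hik => i.2 (by simp [hik])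
    simp only [update_of_ne hik, c, dif_pos i.2]

end Matrix.IsHyperbolicPartner

end IsotropicLifts

namespace Ortho

open Matrix

theorem exists_isHyperbolicPartner_Gmat {n ν δ : ℕ} {z : ZMod (2^n)} {j : Fin (2*ν+δ)}
    (hj : j.val < 2*ν) : ∃ k, k ≠ j ∧ (Gmat n ν δ z).IsHyperbolicPartner j k := by
  obtain ⟨k, hk⟩ : ∃ k : Fin (2*ν+δ),
      (j.val < ν ∧ k.val = j.val + ν) ∨ (ν ≤ j.val ∧ k.val + ν = j.val) := by
    rcases Nat.lt_or_ge j.val ν with h | h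
    · exact ⟨⟨j + ν, by omega⟩, .inl ⟨h, rfl⟩⟩
    · exact ⟨⟨j - ν, by omega⟩, .inr ⟨h, by simp only; omega⟩⟩
  have hpolar (i : Fin (2*ν+δ)) :
      (Gmat n ν δ z + (Gmat n ν δ z)ᵀ) k i = if i = j then 1 else 0 := by
    simp only [Matrix.add_apply, transpose_apply, Gmat, of_apply]
    rcases eq_or_ne i j with rfl | hij
    · rw [if_pos rfl]
      split_ifs <;> first | omega | norm_num
    · rw [if_neg hij]
      have := Fin.val_ne_of_ne hij
      split_ifs <;> first | omega | norm_num
  refine ⟨k, fun hkj => by subst hkj; omega, ⟨?_, fun c => ?_⟩⟩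
  · simp only [Gmat, of_apply]
    split_ifs <;> first | omega | rfl
  · simp [mulVec, dotProduct, hpolar]

theorem card_liftClasses_eq_card_normalizedLifts {n ν δ : ℕ} {z : ZMod (2^n)} (hn : 0 < n)
    (a : Vec n ν δ) {j : Fin (2*ν+δ)} (hja : IsUnit (a j)) :
    Nat.card {B : Vertex n ν δ z // ∃ b : VertexRep n ν δ z, (⟦b⟧ : Vertex n ν δ z) = B ∧
        ∀ i, ∃ y, (b : Vec n ν δ) i = a i + 2*y} =
      Nat.card {b : Vec n ν δ //
        b ⬝ᵥ Gmat n ν δ z *ᵥ b = 0 ∧ (∀ i, 2 ∣ b i - a i) ∧ b j = a j} := by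
  have hlift {x c : ZMod (2^n)} : (∃ y, x = c + 2 * y) ↔ 2 ∣ x - c :=
    (exists_congr fun _ => sub_eq_iff_eq_add').symm
  symm
  refine Nat.card_eq_of_bijective (fun b => ⟨⟦⟨b.1, ⟨j, by rw [b.2.2.2]; exact hja⟩, b.2.1⟩⟧,
    _, rfl, fun i => hlift.mpr (b.2.2.1 i)⟩) ⟨?_, ?_⟩
  · rintro ⟨b, hb, _, hbj⟩ ⟨b', hb', _, hb'j⟩ hbb'
    obtain ⟨u, hu⟩ := Quotient.exact (congrArg Subtype.val hbb')
    have hu1 : (u : ZMod (2^n)) = 1 := by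
      have := congrFun hu j
      simp only [Pi.smul_apply, smul_eq_mul, hbj, hb'j] at this
      exact (hja.mul_eq_right).mp this.symm
    ext1
    simpa [hu1] using hu
  · rintro ⟨B, b, rfl, hb⟩
    have hbj : IsUnit ((b : Vec n ν δ) j) := isUnit_of_dvd_sub
      (by simpa using ZMod.isNilpotent_natCast_pow_self 2 n) (hlift.mp (hb j)) hja
    let u := hja.unit * hbj.unit⁻¹
    refine ⟨⟨(u : ZMod (2^n)) • (b : Vec n ν δ), ?_, fun i => ?_, ?_⟩,
      Subtype.ext (Quotient.sound ⟨u, rfl⟩)⟩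
    · simp [mulVec_smul, b.2.2]
    · have hu := ZMod.two_dvd_sub_one_of_isUnit (dvd_pow_self 2 hn.ne') u.isUnit
      convert dvd_add (dvd_mul_of_dvd_left hu ((b : Vec n ν δ) i)) (hlift.mp (hb i)) using 1
      simp only [Pi.smul_apply, smul_eq_mul]
      ring
    · simp [u, mul_assoc]

theorem card_lifts_general (n ν δ : ℕ) (hn : 0 < n)
    (z : ZMod (2^n)) (a : VertexRep n ν δ z)
    (ha : ∃ j : Fin (2*ν+δ), j.val < 2*ν ∧ IsUnit ((a : Vec n ν δ) j)) :
    Nat.card {B : Vertex n ν δ z // ∃ b : VertexRep n ν δ z,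
        (⟦b⟧ : Vertex n ν δ z) = B ∧
        ∀ i, ∃ y, (b : Vec n ν δ) i = (a : Vec n ν δ) i + 2*y} =
      2^((n-1)*(2*ν+δ-2)) := by
  obtain ⟨j, hj, hja⟩ := ha
  obtain ⟨k, hkj, hpartner⟩ := exists_isHyperbolicPartner_Gmat (z := z) hj
  have hcoset (c : ZMod (2^n)) : Nat.card {x : ZMod (2^n) // 2 ∣ x - c} = 2^(n-1) := by
    have h2n : 2^n / 2 = 2^(n-1) :=
      Nat.div_eq_of_eq_mul_left two_pos (pow_sub_one_mul hn.ne' 2).symm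
    simpa [h2n] using ZMod.card_dvd_sub (dvd_pow_self 2 hn.ne') c
  have hindex : Fintype.card {i // i ∉ ({j, k} : Finset (Fin (2*ν+δ)))} = 2*ν+δ-2 := by
    rw [Fintype.card_subtype_compl, Fintype.card_coe, Finset.card_pair hkj.symm, Fintype.card_fin]
  rw [card_liftClasses_eq_card_normalizedLifts hn _ hja,
    hpartner.card_isotropicLifts hkj.symm a.2.2 hja, Nat.card_pi]
  simp only [hcoset, Finset.prod_const, Finset.card_univ, hindex, ← pow_mul]

theorem card_lifts (n ν δ : ℕ) (hn : 0 < n) (hν : 0 < ν) (hδ : δ ≤ 2)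
    (z : ZMod (2^n)) (hz : IsUnit z) (a : VertexRep n ν δ z)
    (ha : ∃ j : Fin (2*ν+δ), j.val < 2*ν ∧ IsUnit ((a : Vec n ν δ) j)) :
    Nat.card {B : Vertex n ν δ z // ∃ b : VertexRep n ν δ z,
        (⟦b⟧ : Vertex n ν δ z) = B ∧
        ∀ i, ∃ y, (b : Vec n ν δ) i = (a : Vec n ν δ) i + 2*y} =
      2^((n-1)*(2*ν+δ-2)) :=
  card_lifts_general n ν δ hn z a ha

end Ortho
end

section
/- The orthogonal graph 𝒪^{(2ν+δ)}_{2ⁿ} is regular of degree 2^{n(2ν+δ−2)}: every vertex is adjacent to exactly 2^{n(2ν+δ−2)} other vertices. -/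
namespace Ortho
open Matrix

noncomputable def pr (n : ℕ) (hn : 0 < n) : ZMod (2^n) →+* ZMod 2 :=
  ZMod.castHom (dvd_pow_self 2 hn.ne') (ZMod 2)

lemma isUnit_iff_pr {n : ℕ} (hn : 0 < n) (x : ZMod (2^n)) :
    IsUnit x ↔ pr n hn x ≠ 0 := by
  constructor
  · intro h h0
    have : IsUnit (pr n hn x) := h.map _
    rw [h0] at this
    exact not_isUnit_zero this
  · intro h
    have hx : pr n hn x = ((x.val : ℕ) : ZMod 2) := by
      simp [pr, ZMod.castHom_apply, ZMod.natCast_val]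
    have h2 : ¬ (2 ∣ x.val) := by
      intro hd
      apply h
      rw [hx]
      exact_mod_cast (ZMod.natCast_eq_zero_iff x.val 2).mpr hd
    have hc : Nat.Coprime x.val 2 := (Nat.Prime.coprime_iff_not_dvd Nat.prime_two).mpr h2 |>.symm
    have hc2 : Nat.Coprime x.val (2^n) := Nat.Coprime.pow_right n hc
    have := (ZMod.isUnit_iff_coprime x.val (2^n)).mpr hc2
    rwa [ZMod.natCast_val, ZMod.cast_id] at this

lemma exists_isUnit_of_dot_isUnit {n : ℕ} {ι : Type*} [Fintype ι] (hn : 0 < n)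
    (b c : ι → ZMod (2^n)) (h : IsUnit (b ⬝ᵥ c)) : ∃ i, IsUnit (b i) := by
  by_contra hcon
  push_neg at hcon
  have h0 : ∀ i, pr n hn (b i) = 0 := fun i => by
    by_contra h'; exact hcon i ((isUnit_iff_pr hn _).mpr h')
  have hz : pr n hn (b ⬝ᵥ c) = 0 := by
    simp only [dotProduct, map_sum, _root_.map_mul, h0, zero_mul]
    simp
  exact (isUnit_iff_pr hn _).mp h hz

section bil
variable {n ν δ : ℕ}

lemma dot_transpose (M : Matrix (Fin (2*ν+δ)) (Fin (2*ν+δ)) (ZMod (2^n)))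
    (x y : Vec n ν δ) : x ⬝ᵥ Mᵀ.mulVec y = y ⬝ᵥ M.mulVec x := by
  rw [Matrix.mulVec_transpose, dotProduct_comm, ← Matrix.dotProduct_mulVec]

variable (G : Matrix (Fin (2*ν+δ)) (Fin (2*ν+δ)) (ZMod (2^n)))

lemma bil_symm (a b : Vec n ν δ) :
    a ⬝ᵥ (G + Gᵀ).mulVec b = b ⬝ᵥ (G + Gᵀ).mulVec a := by
  simp only [Matrix.add_mulVec, dotProduct_add, dot_transpose]
  ring

lemma bil_smul_left (u : ZMod (2^n)) (a b : Vec n ν δ) :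
    (u • a) ⬝ᵥ (G + Gᵀ).mulVec b = u * (a ⬝ᵥ (G + Gᵀ).mulVec b) := by
  rw [smul_dotProduct, smul_eq_mul]

lemma bil_smul_right (u : ZMod (2^n)) (a b : Vec n ν δ) :
    a ⬝ᵥ (G + Gᵀ).mulVec (u • b) = u * (a ⬝ᵥ (G + Gᵀ).mulVec b) := by
  rw [Matrix.mulVec_smul, dotProduct_smul, smul_eq_mul]

lemma bil_self (a : Vec n ν δ) (h : a ⬝ᵥ G.mulVec a = 0) :
    a ⬝ᵥ (G + Gᵀ).mulVec a = 0 := by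
  simp only [Matrix.add_mulVec, dotProduct_add, dot_transpose, h]
  simp

lemma quad_expand (a b : Vec n ν δ) (t : ZMod (2^n)) :
    (b + t • a) ⬝ᵥ G.mulVec (b + t • a) =
      b ⬝ᵥ G.mulVec b + t * (a ⬝ᵥ (G + Gᵀ).mulVec b) + t^2 * (a ⬝ᵥ G.mulVec a) := by
  simp only [Matrix.mulVec_add, Matrix.mulVec_smul, dotProduct_add, add_dotProduct,
    dotProduct_smul, smul_dotProduct, smul_eq_mul, Matrix.add_mulVec, dot_transpose]
  ring

lemma quad_smul (a : Vec n ν δ) (t : ZMod (2^n)) :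
    (t • a) ⬝ᵥ G.mulVec (t • a) = t^2 * (a ⬝ᵥ G.mulVec a) := by
  simp only [Matrix.mulVec_smul, dotProduct_smul, smul_dotProduct, smul_eq_mul]
  ring

end bil

section entries
variable {n ν δ : ℕ} {z : ZMod (2^n)}

lemma beta_mulVec_apply (a : Vec n ν δ) (i : Fin (2*ν+δ)) :
    ((Gmat n ν δ z + (Gmat n ν δ z)ᵀ).mulVec a) i
      = ∑ j, (Gmat n ν δ z i j + Gmat n ν δ z j i) * a j := by
  simp [Matrix.mulVec, dotProduct, Matrix.add_apply, Matrix.transpose_apply]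

lemma cvec_lt (a : Vec n ν δ) (i k : Fin (2*ν+δ)) (hi : i.val < ν)
    (hk : k.val = i.val + ν) :
    ((Gmat n ν δ z + (Gmat n ν δ z)ᵀ).mulVec a) i = a k := by
  rw [beta_mulVec_apply, Finset.sum_eq_single k]
  · simp only [Gmat, Matrix.of_apply]
    split_ifs <;> first | ring1 | (exfalso; omega)
  · intro j _ hj
    have hjk : j.val ≠ k.val := fun h => hj (Fin.ext h)
    simp only [Gmat, Matrix.of_apply]
    split_ifs <;> first | ring1 | (exfalso; omega)
  · intro h; exact absurd (Finset.mem_univ k) h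

lemma cvec_ge (a : Vec n ν δ) (i k : Fin (2*ν+δ)) (hi : ν ≤ i.val)
    (hi2 : i.val < 2*ν) (hk : k.val + ν = i.val) :
    ((Gmat n ν δ z + (Gmat n ν δ z)ᵀ).mulVec a) i = a k := by
  rw [beta_mulVec_apply, Finset.sum_eq_single k]
  · simp only [Gmat, Matrix.of_apply]
    split_ifs <;> first | ring1 | (exfalso; omega)
  · intro j _ hj
    have hjk : j.val ≠ k.val := fun h => hj (Fin.ext h)
    simp only [Gmat, Matrix.of_apply]
    split_ifs <;> first | ring1 | (exfalso; omega)
  · intro h; exact absurd (Finset.mem_univ k) h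

lemma pr_beta (hn : 0 < n) (a : Vec n ν δ) (i : Fin (2*ν+δ)) :
    pr n hn (((Gmat n ν δ z + (Gmat n ν δ z)ᵀ).mulVec a) i)
      = ∑ j, pr n hn (Gmat n ν δ z i j + Gmat n ν δ z j i) * pr n hn (a j) := by
  rw [beta_mulVec_apply, map_sum]
  simp [_root_.map_mul]

lemma cvec_2a (hn : 0 < n) (hδ2 : δ = 2) (a : Vec n ν δ) (i k : Fin (2*ν+δ))
    (hi : i.val = 2*ν) (hk : k.val = 2*ν+1) :
    pr n hn (((Gmat n ν δ z + (Gmat n ν δ z)ᵀ).mulVec a) i) = pr n hn (a k) := by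
  subst hδ2
  rw [pr_beta, Finset.sum_eq_single k]
  · simp only [Gmat, Matrix.of_apply]
    split_ifs <;> first | (exfalso; omega) | simp [CharTwo.add_self_eq_zero]
  · intro j _ hj
    have hjk : j.val ≠ k.val := fun h => hj (Fin.ext h)
    simp only [Gmat, Matrix.of_apply]
    split_ifs <;> first | (exfalso; omega) | simp [CharTwo.add_self_eq_zero]
  · intro h; exact absurd (Finset.mem_univ k) h

lemma cvec_2b (hn : 0 < n) (hδ2 : δ = 2) (a : Vec n ν δ) (i k : Fin (2*ν+δ))
    (hi : i.val = 2*ν+1) (hk : k.val = 2*ν) :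
    pr n hn (((Gmat n ν δ z + (Gmat n ν δ z)ᵀ).mulVec a) i) = pr n hn (a k) := by
  subst hδ2
  rw [pr_beta, Finset.sum_eq_single k]
  · simp only [Gmat, Matrix.of_apply]
    split_ifs <;> first | (exfalso; omega) | simp [CharTwo.add_self_eq_zero]
  · intro j _ hj
    have hjk : j.val ≠ k.val := fun h => hj (Fin.ext h)
    simp only [Gmat, Matrix.of_apply]
    split_ifs <;> first | (exfalso; omega) | simp [CharTwo.add_self_eq_zero]
  · intro h; exact absurd (Finset.mem_univ k) h

lemma delta1_contra (hn : 0 < n) (hδ1 : δ = 1) (a : Vec n ν δ) (i0 : Fin (2*ν+δ))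
    (hi0 : i0.val = 2*ν)
    (hsmall : ∀ j : Fin (2*ν+δ), j.val < 2*ν → pr n hn (a j) = 0)
    (hiso : a ⬝ᵥ (Gmat n ν δ z).mulVec a = 0) : pr n hn (a i0) = 0 := by
  subst hδ1
  have hGa : pr n hn ((Gmat n ν 1 z).mulVec a i0) = pr n hn (a i0) := by
    have heq : (Gmat n ν 1 z).mulVec a i0 = ∑ j, Gmat n ν 1 z i0 j * a j := by
      simp [Matrix.mulVec, dotProduct]
    rw [heq, map_sum]
    rw [Finset.sum_eq_single i0]
    · simp only [Gmat, Matrix.of_apply]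
      split_ifs <;>
        first
          | (exfalso; simp only [and_true, true_and, not_and, not_lt, not_le] at *; omega)
          | simp
    · intro j _ hj
      have hjk : j.val ≠ i0.val := fun h => hj (Fin.ext h)
      have hjlt : j.val < 2*ν := by have := j.isLt; omega
      rw [_root_.map_mul, hsmall j hjlt, mul_zero]
    · intro h; exact absurd (Finset.mem_univ i0) h
  have hQ : pr n hn (a ⬝ᵥ (Gmat n ν 1 z).mulVec a)
      = pr n hn (a i0) * pr n hn (a i0) := by
    have heq : a ⬝ᵥ (Gmat n ν 1 z).mulVec a = ∑ i, a i * (Gmat n ν 1 z).mulVec a i := by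
      simp [dotProduct]
    rw [heq, map_sum, Finset.sum_eq_single i0]
    · rw [_root_.map_mul, hGa]
    · intro j _ hj
      have hjk : j.val ≠ i0.val := fun h => hj (Fin.ext h)
      have hjlt : j.val < 2*ν := by have := j.isLt; omega
      rw [_root_.map_mul, hsmall j hjlt, zero_mul]
    · intro h; exact absurd (Finset.mem_univ i0) h
  rw [hiso, map_zero] at hQ
  have hz2 : ∀ y : ZMod 2, 0 = y * y → y = 0 := by decide
  exact hz2 _ hQ

lemma exists_unit_coord (hn : 0 < n) (hν : 0 < ν) (hδ : δ ≤ 2)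
    (a : Vec n ν δ) (hu : ∃ i, IsUnit (a i))
    (hiso : a ⬝ᵥ (Gmat n ν δ z).mulVec a = 0) :
    ∃ i, IsUnit (((Gmat n ν δ z + (Gmat n ν δ z)ᵀ).mulVec a) i) := by
  by_contra hcon
  push_neg at hcon
  have pc : ∀ i, pr n hn (((Gmat n ν δ z + (Gmat n ν δ z)ᵀ).mulVec a) i) = 0 := by
    intro i
    by_contra h
    exact hcon i ((isUnit_iff_pr hn _).mpr h)
  have hsmall : ∀ j : Fin (2*ν+δ), j.val < 2*ν → pr n hn (a j) = 0 := by
    intro j hj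
    by_cases hjν : j.val < ν
    · have := cvec_ge (z := z) a ⟨j.val + ν, by omega⟩ j
        (by show ν ≤ j.val + ν; omega) (by show j.val + ν < 2*ν; omega) rfl
      rw [← this]; exact pc _
    · have := cvec_lt (z := z) a ⟨j.val - ν, by omega⟩ j
        (by show j.val - ν < ν; omega) (by show j.val = j.val - ν + ν; omega)
      rw [← this]; exact pc _
  interval_cases δ
  · obtain ⟨i, hi⟩ := hu
    have hlt : i.val < 2*ν := by have := i.isLt; omega
    exact (isUnit_iff_pr hn _).mp hi (hsmall i hlt)
  · obtain ⟨i, hi⟩ := hu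
    by_cases h2 : i.val < 2*ν
    · exact (isUnit_iff_pr hn _).mp hi (hsmall i h2)
    · have hi0 : i.val = 2*ν := by have := i.isLt; omega
      exact (isUnit_iff_pr hn _).mp hi (delta1_contra (z := z) hn rfl a i hi0 hsmall hiso)
  · obtain ⟨i, hi⟩ := hu
    apply (isUnit_iff_pr hn _).mp hi
    by_cases hj1 : i.val < 2*ν
    · exact hsmall i hj1
    · by_cases hj2 : i.val = 2*ν
      · have := cvec_2b (z := z) hn rfl a ⟨2*ν+1, by omega⟩ i rfl hj2
        rw [← this]; exact pc _
      · have hj3 : i.val = 2*ν+1 := by have := i.isLt; omega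
        have := cvec_2a (z := z) hn rfl a ⟨2*ν, by omega⟩ i rfl hj3
        rw [← this]; exact pc _

end entries

section counting
variable {n : ℕ} {ι : Type*} [Fintype ι] [DecidableEq ι]

lemma card_dot_eq_one (c : ι → ZMod (2^n)) (hc : ∃ i, IsUnit (c i)) :
    Nat.card {b : ι → ZMod (2^n) // b ⬝ᵥ c = 1} * 2^n = (2^n)^(Fintype.card ι) := by
  obtain ⟨i₀, hu⟩ := hc
  set φ : (ι → ZMod (2^n)) →+ ZMod (2^n) :=
    { toFun := fun b => b ⬝ᵥ c
      map_zero' := zero_dotProduct c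
      map_add' := fun x y => add_dotProduct x y c } with hφ
  have hsect : ∀ r : ZMod (2^n), φ (Pi.single i₀ (r * ↑hu.unit⁻¹)) = r := by
    intro r
    show Pi.single i₀ (r * ↑hu.unit⁻¹) ⬝ᵥ c = r
    rw [single_dotProduct, mul_assoc, IsUnit.val_inv_mul, mul_one]
  have hsurj : Function.Surjective φ := fun r => ⟨_, hsect r⟩
  set b₀ : ι → ZMod (2^n) := Pi.single i₀ ((1:ZMod (2^n)) * ↑hu.unit⁻¹) with hb₀
  have hb₀1 : φ b₀ = 1 := hsect 1
  have e : {b : ι → ZMod (2^n) // b ⬝ᵥ c = 1} ≃ φ.ker :=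
    { toFun := fun b => ⟨b.1 - b₀, by
        rw [AddMonoidHom.mem_ker, map_sub, hb₀1]
        have hb1 : φ b.1 = 1 := b.2
        rw [hb1, sub_self]⟩
      invFun := fun b => ⟨b.1 + b₀, by
        have hk : φ b.1 = 0 := (AddMonoidHom.mem_ker).mp b.2
        show φ (b.1 + b₀) = 1
        rw [map_add, hk, hb₀1, zero_add]⟩
      left_inv := fun b => by ext1; simp
      right_inv := fun b => by ext1; simp }
  rw [Nat.card_congr e]
  have h1 : Nat.card (ι → ZMod (2^n)) = Nat.card ((ι → ZMod (2^n)) ⧸ φ.ker) * Nat.card φ.ker :=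
    AddSubgroup.card_eq_card_quotient_mul_card_addSubgroup φ.ker
  have h2 : Nat.card ((ι → ZMod (2^n)) ⧸ φ.ker) = 2^n := by
    rw [Nat.card_congr (QuotientAddGroup.quotientKerEquivOfSurjective φ hsurj).toEquiv]
    exact Nat.card_zmod _
  have h3 : Nat.card (ι → ZMod (2^n)) = (2^n)^(Fintype.card ι) := by
    rw [Nat.card_pi]
    simp [Nat.card_zmod]
  rw [h3, h2] at h1
  rw [mul_comm] at h1
  omega

end counting

section Tcount
variable {n ν δ : ℕ} {z : ZMod (2^n)}

lemma card_T_eq (hn : 0 < n) (hν : 0 < ν) (hδ : δ ≤ 2)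
    (a : Vec n ν δ) (haU : ∃ i, IsUnit (a i))
    (haQ : a ⬝ᵥ (Gmat n ν δ z).mulVec a = 0) :
    Nat.card {b : Vec n ν δ // b ⬝ᵥ (Gmat n ν δ z).mulVec b = 0 ∧
        a ⬝ᵥ (Gmat n ν δ z + (Gmat n ν δ z)ᵀ).mulVec b = 1} = 2^(n*(2*ν+δ-2)) := by
  classical
  set G := Gmat n ν δ z with hG
  set c : Vec n ν δ := (G + Gᵀ).mulVec a with hc
  have hBaa : a ⬝ᵥ (G + Gᵀ).mulVec a = 0 := bil_self G a haQ
  have hmem : ∀ b : Vec n ν δ, b ⬝ᵥ c = a ⬝ᵥ (G + Gᵀ).mulVec b := fun b => bil_symm G b a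
  -- Step A equiv
  have E : ({b : Vec n ν δ // b ⬝ᵥ G.mulVec b = 0 ∧
        a ⬝ᵥ (G + Gᵀ).mulVec b = 1} × ZMod (2^n)) ≃
      {b : Vec n ν δ // b ⬝ᵥ c = 1} :=
    { toFun := fun p => ⟨p.1.1 + p.2 • a, by
        rw [hmem]
        simp only [Matrix.mulVec_add, Matrix.mulVec_smul, dotProduct_add, dotProduct_smul,
          smul_eq_mul, p.1.2.2, hBaa, mul_zero, add_zero]⟩
      invFun := fun q =>
        (⟨q.1 + (-(q.1 ⬝ᵥ G.mulVec q.1)) • a, by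
          have hq2 := q.2
          rw [hmem] at hq2
          constructor
          · rw [quad_expand G a q.1 (-(q.1 ⬝ᵥ G.mulVec q.1)), hq2, haQ]
            ring
          · simp only [Matrix.mulVec_add, Matrix.mulVec_smul, dotProduct_add, dotProduct_smul,
              smul_eq_mul, hq2, hBaa, mul_zero, add_zero]⟩,
          q.1 ⬝ᵥ G.mulVec q.1)
      left_inv := fun p => by
        obtain ⟨⟨b, hb1, hb2⟩, t⟩ := p
        have hQ : (b + t • a) ⬝ᵥ G.mulVec (b + t • a) = t := by
          rw [quad_expand G a b t, hb1, hb2, haQ]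
          ring
        have h1 : b + t • a + (-((b + t • a) ⬝ᵥ G.mulVec (b + t • a))) • a = b := by
          rw [hQ, neg_smul]
          abel
        exact Prod.ext (Subtype.ext h1) hQ
      right_inv := fun q => by
        obtain ⟨b, hb⟩ := q
        apply Subtype.ext
        show b + (-(b ⬝ᵥ G.mulVec b)) • a + (b ⬝ᵥ G.mulVec b) • a = b
        rw [neg_smul]
        abel }
  have hc_unit : ∃ i, IsUnit (c i) := exists_unit_coord hn hν hδ a haU haQ
  have h1 := card_dot_eq_one c hc_unit
  have h2 := Nat.card_congr E
  rw [Nat.card_prod, Nat.card_zmod] at h2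
  rw [← h2] at h1
  have hcard : Fintype.card (Fin (2*ν+δ)) = 2*ν+δ := Fintype.card_fin _
  rw [hcard] at h1
  have hexp : (2^n)^(2*ν+δ) = 2^(n*(2*ν+δ-2)) * 2^n * 2^n := by
    rw [← pow_mul]
    have hm : n*(2*ν+δ) = n*(2*ν+δ-2) + n + n := by
      have h2le : 2 ≤ 2*ν+δ := by omega
      have : 2*ν+δ-2+2 = 2*ν+δ := by omega
      calc n*(2*ν+δ) = n*((2*ν+δ-2)+2) := by rw [this]
        _ = n*(2*ν+δ-2) + n + n := by ring
    rw [hm, pow_add, pow_add]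
  rw [hexp] at h1
  have hpos : 0 < 2^n := Nat.pow_pos (by norm_num)
  have := Nat.eq_of_mul_eq_mul_right hpos (Nat.eq_of_mul_eq_mul_right hpos h1)
  exact this

end Tcount

end Ortho

namespace Ortho
open Matrix

theorem degree_regular (n ν δ : ℕ) (hn : 0 < n) (hν : 0 < ν) (hδ : δ ≤ 2)
    (z : ZMod (2^n)) (hz : IsUnit z) (A : Vertex n ν δ z) :
    Nat.card {B : Vertex n ν δ z // (OGraph n ν δ z).Adj A B} =
      2^(n*(2*ν+δ-2)) := by
  classical
  obtain ⟨a, rfl⟩ := Quotient.exists_rep A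
  have haQ : (a : Vec n ν δ) ⬝ᵥ (Gmat n ν δ z).mulVec (a : Vec n ν δ) = 0 := a.2.2
  have haU : ∃ i, IsUnit ((a : Vec n ν δ) i) := a.2.1
  have hone : (1 : ZMod (2^n)) ≠ 0 := by
    intro h
    have h2 := congrArg (pr n hn) h
    rw [RingHom.map_one, RingHom.map_zero] at h2
    exact one_ne_zero h2
  set T := {b : Vec n ν δ // b ⬝ᵥ (Gmat n ν δ z).mulVec b = 0 ∧
      (a : Vec n ν δ) ⬝ᵥ (Gmat n ν δ z + (Gmat n ν δ z)ᵀ).mulVec b = 1} with hT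
  have hrep : ∀ b : T, ∃ i, IsUnit (b.1 i) := by
    intro b
    apply exists_isUnit_of_dot_isUnit hn b.1
      ((Gmat n ν δ z + (Gmat n ν δ z)ᵀ).mulVec (a : Vec n ν δ))
    rw [bil_symm, b.2.2]
    exact isUnit_one
  have hbbil : ∀ b : T, b.1 ⬝ᵥ (Gmat n ν δ z + (Gmat n ν δ z)ᵀ).mulVec b.1 = 0 :=
    fun b => bil_self _ b.1 b.2.1
  let f : T → {B : Vertex n ν δ z // (OGraph n ν δ z).Adj ⟦a⟧ B} := fun b =>
    ⟨⟦⟨b.1, hrep b, b.2.1⟩⟧, by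
      constructor
      · intro h
        obtain ⟨u, hu⟩ := Quotient.exact h
        obtain ⟨bv, hb1, hb2⟩ := b
        have hav : (a : Vec n ν δ) = (u : ZMod (2^n)) • bv := hu
        have h1 : (a : Vec n ν δ) ⬝ᵥ (Gmat n ν δ z + (Gmat n ν δ z)ᵀ).mulVec bv = 0 := by
          rw [hav, bil_smul_left, bil_self _ bv hb1, mul_zero]
        rw [hb2] at h1
        exact hone h1
      · left
        exact ⟨a, ⟨b.1, hrep b, b.2.1⟩, rfl, rfl, by rw [b.2.2]; exact isUnit_one⟩⟩
  have hfval : ∀ x : T, (f x).1 = (⟦⟨x.1, hrep x, x.2.1⟩⟧ : Vertex n ν δ z) := fun x => rfl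
  have hfbij : Function.Bijective f := by
    constructor
    · rintro b₁ b₂ hf
      have hq : (⟦⟨b₁.1, hrep b₁, b₁.2.1⟩⟧ : Vertex n ν δ z) = ⟦⟨b₂.1, hrep b₂, b₂.2.1⟩⟧ := by
        rw [← hfval, ← hfval, hf]
      obtain ⟨u, hu⟩ := Quotient.exact hq
      have hu' : b₁.1 = (u : ZMod (2^n)) • b₂.1 := hu
      have h1 : (1 : ZMod (2^n)) = (u : ZMod (2^n)) := by
        have h2 := b₁.2.2
        rw [hu', bil_smul_right, b₂.2.2, mul_one] at h2
        exact h2.symm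
      apply Subtype.ext
      rw [hu', ← h1, one_smul]
    · rintro ⟨B, hB⟩
      obtain ⟨b', hb'⟩ := Quotient.exists_rep B
      have hunit : IsUnit ((a : Vec n ν δ) ⬝ᵥ (Gmat n ν δ z + (Gmat n ν δ z)ᵀ).mulVec b'.1) := by
        rcases hB.2 with h | h
        · obtain ⟨p, q, hp, hq, hpq⟩ := h
          rw [← hb'] at hq
          obtain ⟨u, hu⟩ := Quotient.exact hp
          obtain ⟨w, hw⟩ := Quotient.exact hq
          have hpa : (p : Vec n ν δ) = (u : ZMod (2^n)) • (a : Vec n ν δ) := hu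
          have hqb : (q : Vec n ν δ) = (w : ZMod (2^n)) • b'.1 := hw
          have heq : (p : Vec n ν δ) ⬝ᵥ (Gmat n ν δ z + (Gmat n ν δ z)ᵀ).mulVec (q : Vec n ν δ)
              = (u : ZMod (2^n)) * ((w : ZMod (2^n)) *
                ((a : Vec n ν δ) ⬝ᵥ (Gmat n ν δ z + (Gmat n ν δ z)ᵀ).mulVec b'.1)) := by
            conv_lhs => rw [hpa, hqb]
            rw [bil_smul_left, bil_smul_right]
          rw [heq] at hpq
          exact ((Units.isUnit_units_mul w _).mp ((Units.isUnit_units_mul u _).mp hpq))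
        · obtain ⟨p, q, hp, hq, hpq⟩ := h
          rw [← hb'] at hp
          obtain ⟨u, hu⟩ := Quotient.exact hp
          obtain ⟨w, hw⟩ := Quotient.exact hq
          have hpa : (p : Vec n ν δ) = (u : ZMod (2^n)) • b'.1 := hu
          have hqb : (q : Vec n ν δ) = (w : ZMod (2^n)) • (a : Vec n ν δ) := hw
          have heq : (p : Vec n ν δ) ⬝ᵥ (Gmat n ν δ z + (Gmat n ν δ z)ᵀ).mulVec (q : Vec n ν δ)
              = (u : ZMod (2^n)) * ((w : ZMod (2^n)) *
                (b'.1 ⬝ᵥ (Gmat n ν δ z + (Gmat n ν δ z)ᵀ).mulVec (a : Vec n ν δ))) := by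
            conv_lhs => rw [hpa, hqb]
            rw [bil_smul_left, bil_smul_right]
          rw [heq] at hpq
          have h3 := ((Units.isUnit_units_mul w _).mp ((Units.isUnit_units_mul u _).mp hpq))
          rwa [bil_symm] at h3
      have hQval : ((↑hunit.unit⁻¹ : ZMod (2^n)) • b'.1) ⬝ᵥ
          (Gmat n ν δ z).mulVec ((↑hunit.unit⁻¹ : ZMod (2^n)) • b'.1) = 0 := by
        rw [quad_smul, b'.2.2, mul_zero]
      have hBval : (a : Vec n ν δ) ⬝ᵥ (Gmat n ν δ z + (Gmat n ν δ z)ᵀ).mulVec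
          ((↑hunit.unit⁻¹ : ZMod (2^n)) • b'.1) = 1 := by
        rw [bil_smul_right, IsUnit.val_inv_mul]
      refine ⟨⟨_, hQval, hBval⟩, Subtype.ext ?_⟩
      rw [hfval]
      show _ = B
      rw [← hb']
      exact Quotient.sound ⟨hunit.unit⁻¹, rfl⟩
  have hcard := Nat.card_eq_of_bijective f hfbij
  rw [← hcard]
  exact card_T_eq hn hν hδ (a : Vec n ν δ) haU haQ

end Ortho
end

section
/- The orthogonal graph 𝒪^{(2ν+δ)}_{2ⁿ} is arc transitive: for any two ordered pairs of adjacent vertices ([a],[c]) and ([b],[d]), there is a graph automorphism sending [a] to [b] and [c] to [d]. In particular it is vertex transitive. -/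
namespace Ortho
open Matrix

variable {n ν δ : ℕ}

def qf (z : ZMod (2^n)) (a : Vec n ν δ) : ZMod (2^n) := a ⬝ᵥ (Gmat n ν δ z).mulVec a

def Mmat (n ν δ : ℕ) (z : ZMod (2^n)) := Gmat n ν δ z + (Gmat n ν δ z)ᵀ

def bf (z : ZMod (2^n)) (a b : Vec n ν δ) : ZMod (2^n) := a ⬝ᵥ (Mmat n ν δ z).mulVec b

variable {z : ZMod (2^n)}

lemma Mmat_symm : (Mmat n ν δ z)ᵀ = Mmat n ν δ z := by
  simp [Mmat, Matrix.transpose_add, add_comm]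

lemma bf_symm (a b : Vec n ν δ) : bf z a b = bf z b a := by
  rw [bf, dotProduct_mulVec, ← Mmat_symm (z := z), vecMul_transpose, dotProduct_comm, bf]

lemma bf_add_left (a b c : Vec n ν δ) : bf z (a + b) c = bf z a c + bf z b c := by
  simp [bf, add_dotProduct]

lemma bf_add_right (a b c : Vec n ν δ) : bf z a (b + c) = bf z a b + bf z a c := by
  simp [bf, mulVec_add, dotProduct_add]

lemma bf_smul_left (r : ZMod (2^n)) (a b : Vec n ν δ) : bf z (r • a) b = r * bf z a b := by
  simp [bf, smul_dotProduct, smul_eq_mul]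

lemma bf_smul_right (r : ZMod (2^n)) (a b : Vec n ν δ) : bf z a (r • b) = r * bf z a b := by
  simp [bf, mulVec_smul, dotProduct_smul, smul_eq_mul]

lemma bf_neg_right (a b : Vec n ν δ) : bf z a (-b) = - bf z a b := by
  have : (-b) = (-1 : ZMod (2^n)) • b := by ext i; simp
  rw [this, bf_smul_right]; ring

lemma qf_add (a b : Vec n ν δ) : qf z (a + b) = qf z a + qf z b + bf z a b := by
  have h : a ⬝ᵥ (Gmat n ν δ z)ᵀ.mulVec b = b ⬝ᵥ (Gmat n ν δ z).mulVec a := by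
    rw [mulVec_transpose, dotProduct_comm, ← dotProduct_mulVec]
  simp only [qf, bf, Mmat, mulVec_add, add_mulVec, dotProduct_add, add_dotProduct, h]
  ring

lemma qf_smul (r : ZMod (2^n)) (a : Vec n ν δ) : qf z (r • a) = r * r * qf z a := by
  simp [qf, smul_dotProduct, mulVec_smul, dotProduct_smul, smul_eq_mul]; ring

lemma qf_neg (a : Vec n ν δ) : qf z (-a) = qf z a := by
  have : (-a) = (-1 : ZMod (2^n)) • a := by ext i; simp
  rw [this, qf_smul]; ring

lemma bf_self (a : Vec n ν δ) : bf z a a = 2 * qf z a := by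
  have h := qf_add (z := z) a a
  have h2 : a + a = (2 : ZMod (2^n)) • a := by ext i; simp [two_mul]
  rw [h2, qf_smul] at h
  have : (2:ZMod (2^n)) * 2 * qf z a = qf z a + qf z a + bf z a a := h
  linear_combination -this

lemma qf_sub (a b : Vec n ν δ) : qf z (a - b) = qf z a + qf z b - bf z a b := by
  rw [sub_eq_add_neg, qf_add, qf_neg, bf_neg_right]; ring

/-- standard basis vector -/
def ee (k : Fin (2*ν+δ)) : Vec n ν δ := fun j => if j = k then 1 else 0

/-- hyperbolic partner index -/
def pt (k : Fin (2*ν+δ)) : Fin (2*ν+δ) :=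
  if h : k.val < ν then ⟨k.val + ν, by omega⟩
  else if h2 : k.val < 2*ν then ⟨k.val - ν, by omega⟩
  else k

lemma pt_val (k : Fin (2*ν+δ)) :
    (pt k).val = if k.val < ν then k.val + ν else if k.val < 2*ν then k.val - ν else k.val := by
  unfold pt; split_ifs <;> rfl

lemma pt_lt (k : Fin (2*ν+δ)) (hk : k.val < 2*ν) : (pt k).val < 2*ν := by
  rw [pt_val]; split_ifs <;> omega

lemma pt_ne (hν : 0 < ν) (k : Fin (2*ν+δ)) (hk : k.val < 2*ν) : pt k ≠ k := by
  intro hEq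
  have h := congrArg Fin.val hEq
  rw [pt_val] at h; split_ifs at h <;> omega

lemma pt_pt (k : Fin (2*ν+δ)) (hk : k.val < 2*ν) : pt (pt k) = k := by
  apply Fin.ext
  rw [pt_val, pt_val]
  split_ifs <;> omega


lemma ee_apply_self (k : Fin (2*ν+δ)) : (ee (n := n) k) k = 1 := by simp [ee]

lemma ee_apply_ne {j k : Fin (2*ν+δ)} (h : j ≠ k) : (ee (n := n) k) j = 0 := by simp [ee, h]

lemma dot_ee (x : Vec n ν δ) (k : Fin (2*ν+δ)) :
    (∑ i, x i * (ee (n := n) k) i) = x k := by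
  simp [ee, mul_ite, Finset.sum_ite_eq']

lemma Mmat_col (hν : 0 < ν) (k : Fin (2*ν+δ)) (hk : k.val < 2*ν) (i : Fin (2*ν+δ)) :
    Mmat n ν δ z i k = (ee (n := n) (pt k)) i := by
  rcases lt_or_ge k.val ν with h | h
  · have hpt : (pt k).val = k.val + ν := by rw [pt_val]; simp [h]
    simp only [Mmat, Matrix.add_apply, Matrix.transpose_apply, Gmat, Matrix.of_apply, ee,
      Fin.ext_iff, hpt]
    split_ifs <;> first | rfl | (exfalso; omega) | ring1
  · have hpt : (pt k).val = k.val - ν := by rw [pt_val]; split_ifs <;> omega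
    simp only [Mmat, Matrix.add_apply, Matrix.transpose_apply, Gmat, Matrix.of_apply, ee,
      Fin.ext_iff, hpt]
    split_ifs <;> first | rfl | (exfalso; omega) | ring1

lemma mulVec_ee (A : Matrix (Fin (2*ν+δ)) (Fin (2*ν+δ)) (ZMod (2^n))) (k : Fin (2*ν+δ)) :
    A.mulVec (ee (n := n) k) = fun i => A i k := by
  funext i
  simp [mulVec, dotProduct, ee, mul_ite, Finset.sum_ite_eq']

lemma bf_ee (hν : 0 < ν) (x : Vec n ν δ) (k : Fin (2*ν+δ)) (hk : k.val < 2*ν) :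
    bf z x (ee k) = x (pt k) := by
  rw [bf, mulVec_ee]
  calc (x ⬝ᵥ fun i => Mmat n ν δ z i k) = ∑ i, x i * (ee (n := n) (pt k)) i := by
        simp only [dotProduct]; exact Finset.sum_congr rfl fun i _ => by rw [Mmat_col hν k hk i]
    _ = x (pt k) := dot_ee x (pt k)

lemma qf_ee (hν : 0 < ν) (k : Fin (2*ν+δ)) (hk : k.val < 2*ν) : qf z (ee k) = 0 := by
  have h1 : (Gmat n ν δ z).mulVec (ee k) = fun i => Gmat n ν δ z i k := mulVec_ee _ k
  have : qf z (ee (n:=n) k) = Gmat n ν δ z k k := by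
    rw [qf, h1, dotProduct]
    have : ∀ i, (ee (n:=n) k) i * Gmat n ν δ z i k
        = if i = k then Gmat n ν δ z i k else 0 := by
      intro i; simp [ee, ite_mul]
    rw [Finset.sum_congr rfl fun i _ => this i, Finset.sum_ite_eq']
    simp
  rw [this]
  simp only [Gmat, Matrix.of_apply]
  split_ifs <;> first | rfl | (exfalso; omega)


lemma mulVec_apply (A : Matrix (Fin (2*ν+δ)) (Fin (2*ν+δ)) (ZMod (2^n))) (x : Vec n ν δ)
    (i : Fin (2*ν+δ)) : A.mulVec x i = ∑ j, A i j * x j := rfl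

lemma mulVec_G_lo (a : Vec n ν δ) (i : Fin (2*ν+δ)) (hi : i.val < ν) :
    (Gmat n ν δ z).mulVec a i = a ⟨i.val + ν, by omega⟩ := by
  rw [mulVec_apply]
  have h : ∀ j, Gmat n ν δ z i j * a j
      = if j = (⟨i.val + ν, by omega⟩ : Fin (2*ν+δ)) then a j else 0 := by
    intro j
    simp only [Gmat, Matrix.of_apply, Fin.ext_iff, Fin.val_mk]
    split_ifs <;> first | (exfalso; omega) | ring1
  rw [Finset.sum_congr rfl fun j _ => h j, Finset.sum_ite_eq']
  simp

lemma mulVec_G_mid (a : Vec n ν δ) (i : Fin (2*ν+δ)) (hi1 : ν ≤ i.val) (hi2 : i.val < 2*ν) :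
    (Gmat n ν δ z).mulVec a i = 0 := by
  rw [mulVec_apply]
  apply Finset.sum_eq_zero
  intro j _
  simp only [Gmat, Matrix.of_apply]
  split_ifs <;> first | (exfalso; omega) | ring1

lemma mulVec_G_hi1 (hδ : δ = 1) (a : Vec n ν δ) (i : Fin (2*ν+δ)) (hi : i.val = 2*ν) :
    (Gmat n ν δ z).mulVec a i = a i := by
  rw [mulVec_apply]
  have h : ∀ j, Gmat n ν δ z i j * a j = if j = i then a j else 0 := by
    intro j
    simp only [Gmat, Matrix.of_apply, Fin.ext_iff]
    split_ifs <;> first | (exfalso; omega) | ring1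
  rw [Finset.sum_congr rfl fun j _ => h j, Finset.sum_ite_eq']
  simp

lemma mulVec_G_hi2a (hδ : δ = 2) (a : Vec n ν δ) (i : Fin (2*ν+δ)) (hi : i.val = 2*ν) :
    (Gmat n ν δ z).mulVec a i = z * a i + a ⟨2*ν+1, by omega⟩ := by
  rw [mulVec_apply]
  have h : ∀ j, Gmat n ν δ z i j * a j
      = (if j = i then z * a j else 0)
        + (if j = (⟨2*ν+1, by omega⟩ : Fin (2*ν+δ)) then a j else 0) := by
    intro j
    simp only [Gmat, Matrix.of_apply, Fin.ext_iff, Fin.val_mk]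
    split_ifs <;> first | (exfalso; omega) | ring1
  rw [Finset.sum_congr rfl fun j _ => h j, Finset.sum_add_distrib,
    Finset.sum_ite_eq', Finset.sum_ite_eq']
  simp

lemma mulVec_G_hi2b (hδ : δ = 2) (a : Vec n ν δ) (i : Fin (2*ν+δ)) (hi : i.val = 2*ν+1) :
    (Gmat n ν δ z).mulVec a i = z * a i := by
  rw [mulVec_apply]
  have h : ∀ j, Gmat n ν δ z i j * a j = if j = i then z * a j else 0 := by
    intro j
    simp only [Gmat, Matrix.of_apply, Fin.ext_iff]
    split_ifs <;> first | (exfalso; omega) | ring1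
  rw [Finset.sum_congr rfl fun j _ => h j, Finset.sum_ite_eq']
  simp

def tailq (z : ZMod (2^n)) (a : Vec n ν δ) : ZMod (2^n) :=
  if h : δ = 1 then a ⟨2*ν, by omega⟩ * a ⟨2*ν, by omega⟩
  else if h2 : δ = 2 then
    z * a ⟨2*ν, by omega⟩ * a ⟨2*ν, by omega⟩ + a ⟨2*ν, by omega⟩ * a ⟨2*ν+1, by omega⟩
      + z * a ⟨2*ν+1, by omega⟩ * a ⟨2*ν+1, by omega⟩
  else 0

def hsum (a : Vec n ν δ) : ZMod (2^n) :=
  ∑ i ∈ Finset.range ν,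
    (if h : i < ν then a ⟨i, by omega⟩ * a ⟨i + ν, by omega⟩ else 0)

def Ftail (z : ZMod (2^n)) (a : Vec n ν δ) : ℕ → ZMod (2^n) :=
  fun i => if h : i < 2*ν+δ then a ⟨i, h⟩ * (Gmat n ν δ z).mulVec a ⟨i, h⟩ else 0

lemma q_eval_aux (a : Vec n ν δ) :
    qf z a = hsum a + ∑ i ∈ Finset.Ico (2*ν) (2*ν+δ), Ftail z a i := by
  have h0 : qf z a = ∑ i ∈ Finset.range (2*ν+δ), Ftail z a i := by
    rw [qf, dotProduct, ← Fin.sum_univ_eq_sum_range]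
    apply Finset.sum_congr rfl
    intro i _
    simp only [Ftail, i.isLt, dif_pos, Fin.eta]
  have hmid : ∀ i ∈ Finset.Ico ν (2*ν), Ftail z a i = 0 := by
    intro i hi
    rw [Finset.mem_Ico] at hi
    simp only [Ftail]
    rw [dif_pos (by omega : i < 2*ν+δ), mulVec_G_mid a _ (by simpa using hi.1) (by simpa using hi.2)]
    ring
  have hlow : ∑ i ∈ Finset.range ν, Ftail z a i = hsum a := by
    apply Finset.sum_congr rfl
    intro i hi
    rw [Finset.mem_range] at hi
    simp only [Ftail, hsum]
    rw [dif_pos (by omega : i < 2*ν+δ), dif_pos hi, mulVec_G_lo a _ (by simpa using hi)]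
  rw [h0, Finset.range_eq_Ico,
    ← Finset.sum_Ico_consecutive (Ftail z a) (Nat.zero_le (2*ν)) (by omega : 2*ν ≤ 2*ν+δ),
    ← Finset.sum_Ico_consecutive (Ftail z a) (Nat.zero_le ν) (by omega : ν ≤ 2*ν),
    Finset.sum_eq_zero hmid, add_zero, ← Finset.range_eq_Ico, hlow]

lemma q_eval (hδ : δ ≤ 2) (a : Vec n ν δ) :
    qf z a = hsum a + tailq z a := by
  obtain rfl | rfl | rfl : δ = 0 ∨ δ = 1 ∨ δ = 2 := by omega
  · rw [q_eval_aux]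
    simp [tailq]
  · rw [q_eval_aux, Finset.sum_Ico_succ_top (by omega : 2*ν ≤ 2*ν), Finset.Ico_self,
      Finset.sum_empty, zero_add]
    congr 1
    simp only [Ftail]
    rw [dif_pos (by omega : 2*ν < 2*ν+1), mulVec_G_hi1 rfl a _ (by simp)]
    simp [tailq]
  · rw [q_eval_aux,
      show 2*ν+2 = (2*ν+1)+1 from rfl,
      Finset.sum_Ico_succ_top (by omega : 2*ν ≤ 2*ν+1),
      Finset.sum_Ico_succ_top (by omega : 2*ν ≤ 2*ν), Finset.Ico_self,
      Finset.sum_empty, zero_add]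
    congr 1
    have e1 : Ftail z a (2*ν)
        = a ⟨2*ν, by omega⟩ * (z * a ⟨2*ν, by omega⟩ + a ⟨2*ν+1, by omega⟩) := by
      simp only [Ftail]
      rw [dif_pos (by omega : 2*ν < 2*ν+2), mulVec_G_hi2a rfl a _ (by simp)]
    have e2 : Ftail z a (2*ν+1) = a ⟨2*ν+1, by omega⟩ * (z * a ⟨2*ν+1, by omega⟩) := by
      simp only [Ftail]
      rw [dif_pos (by omega : 2*ν+1 < 2*ν+2), mulVec_G_hi2b rfl a _ (by simp)]
    rw [e1, e2]
    simp only [tailq]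
    norm_num
    ring

section Parity

instance : NeZero (2^n) := ⟨pow_ne_zero n two_ne_zero⟩

/-- reduction mod 2 -/
def pr2 (hn : 0 < n) : ZMod (2^n) →+* ZMod 2 :=
  ZMod.castHom (dvd_pow_self 2 hn.ne') (ZMod 2)

lemma pr2_natCast (hn : 0 < n) (k : ℕ) : pr2 hn ((k : ℕ) : ZMod (2^n)) = (k : ZMod 2) := map_natCast _ k

lemma pr2_eq_zero_iff (hn : 0 < n) (x : ZMod (2^n)) : pr2 hn x = 0 ↔ ∃ y, x = 2 * y := by
  constructor
  · intro h
    have hx : ((x.val : ℕ) : ZMod (2^n)) = x := ZMod.natCast_rightInverse x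
    have h2 : ((x.val : ℕ) : ZMod 2) = 0 := by
      rw [← pr2_natCast hn x.val, hx, h]
    have hdvd : 2 ∣ x.val := by
      rwa [ZMod.natCast_eq_zero_iff] at h2
    obtain ⟨k, hk⟩ := hdvd
    exact ⟨(k : ZMod (2^n)), by rw [← hx, hk]; push_cast; ring⟩
  · rintro ⟨y, rfl⟩
    rw [_root_.map_mul]
    have : pr2 hn (2 : ZMod (2^n)) = 0 := by
      have := pr2_natCast hn 2
      norm_num at this
      rw [this]
      decide
    rw [this, zero_mul]

lemma isUnit_iff_pr2 (hn : 0 < n) (x : ZMod (2^n)) : IsUnit x ↔ pr2 hn x ≠ 0 := by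
  constructor
  · intro h h0
    have : IsUnit (pr2 hn x) := h.map (pr2 hn)
    rw [h0] at this
    rw [isUnit_zero_iff] at this
    exact absurd this (by decide)
  · intro h
    have hx : ((x.val : ℕ) : ZMod (2^n)) = x := ZMod.natCast_rightInverse x
    have hodd : ¬ (2 ∣ x.val) := by
      intro hdvd
      apply h
      rw [pr2_eq_zero_iff]
      obtain ⟨k, hk⟩ := hdvd
      exact ⟨(k : ZMod (2^n)), by rw [← hx, hk]; push_cast; ring⟩
    have hcop : Nat.Coprime x.val 2 := by
      rw [Nat.coprime_two_right, Nat.odd_iff]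
      omega
    have : IsUnit ((x.val : ℕ) : ZMod (2^n)) := by
      rw [ZMod.isUnit_iff_coprime]
      exact Nat.Coprime.pow_right n hcop
    rwa [hx] at this

lemma not_isUnit_two_mul (hn : 0 < n) (y : ZMod (2^n)) : ¬ IsUnit (2 * y) := by
  rw [isUnit_iff_pr2 hn, not_not, pr2_eq_zero_iff]
  exact ⟨y, rfl⟩

lemma isUnit_add_nonunit (hn : 0 < n) {x y : ZMod (2^n)} (hx : IsUnit x) (hy : ¬ IsUnit y) :
    IsUnit (x + y) := by
  rw [isUnit_iff_pr2 hn] at hx ⊢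
  rw [isUnit_iff_pr2 hn, not_not] at hy
  rw [map_add, hy, add_zero]
  exact hx

lemma nonunit_eq_two_mul (hn : 0 < n) {x : ZMod (2^n)} (hx : ¬ IsUnit x) : ∃ y, x = 2 * y := by
  rw [← pr2_eq_zero_iff hn]
  rw [isUnit_iff_pr2 hn, not_not] at hx
  exact hx

end Parity


lemma exists_unit_coord_s17 (hn : 0 < n) (hν : 0 < ν) (hδ : δ ≤ 2) (hz : IsUnit z)
    (a : Vec n ν δ) (ha : ∃ i, IsUnit (a i)) (hq : qf z a = 0) :
    ∃ j : Fin (2*ν+δ), j.val < 2*ν ∧ IsUnit (a j) := by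
  by_contra hcon
  push_neg at hcon
  have hlow : ∀ j : Fin (2*ν+δ), j.val < 2*ν → pr2 hn (a j) = 0 := by
    intro j hj
    have := hcon j hj
    rwa [isUnit_iff_pr2 hn, not_not] at this
  have hq2 : pr2 hn (hsum a) + pr2 hn (tailq z a) = 0 := by
    rw [← _root_.map_add, ← q_eval hδ a, hq, map_zero]
  have hhs : pr2 hn (hsum a) = 0 := by
    rw [hsum, map_sum]
    apply Finset.sum_eq_zero
    intro i hi
    rw [Finset.mem_range] at hi
    rw [dif_pos hi, _root_.map_mul, hlow ⟨i, by omega⟩ (by simpa using (by omega : i < 2*ν)),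
      zero_mul]
  have htail : pr2 hn (tailq z a) = 0 := by rwa [hhs, zero_add] at hq2
  obtain ⟨i, hi⟩ := ha
  have hige : 2*ν ≤ i.val := by
    by_contra h
    exact (hcon i (by omega)) hi
  have hilt := i.isLt
  obtain rfl | rfl | rfl : δ = 0 ∨ δ = 1 ∨ δ = 2 := by omega
  · omega
  · have e : tailq z a = a ⟨2*ν, by omega⟩ * a ⟨2*ν, by omega⟩ := by norm_num [tailq]
    have h1 : pr2 hn (a ⟨2*ν, by omega⟩) * pr2 hn (a ⟨2*ν, by omega⟩) = 0 := by
      have h := htail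
      rw [e, _root_.map_mul] at h
      exact h
    have h2 : pr2 hn (a ⟨2*ν, by omega⟩) = 0 := by
      have hd : ∀ u : ZMod 2, u * u = 0 → u = 0 := by decide
      exact hd _ h1
    have hie : i = ⟨2*ν, by omega⟩ := by
      apply Fin.ext
      simp only [Fin.val_mk]
      omega
    rw [hie] at hi
    rw [isUnit_iff_pr2 hn] at hi
    exact hi h2
  · have e : tailq z a = z * a ⟨2*ν, by omega⟩ * a ⟨2*ν, by omega⟩
        + a ⟨2*ν, by omega⟩ * a ⟨2*ν+1, by omega⟩
        + z * a ⟨2*ν+1, by omega⟩ * a ⟨2*ν+1, by omega⟩ := by norm_num [tailq]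
    have hw : pr2 hn z = 1 := by
      have h1 : pr2 hn z ≠ 0 := by
        rw [← isUnit_iff_pr2 hn]
        exact hz
      have hd : ∀ u : ZMod 2, u ≠ 0 → u = 1 := by decide
      exact hd _ h1
    have h1 : pr2 hn (a ⟨2*ν, by omega⟩) * pr2 hn (a ⟨2*ν, by omega⟩)
        + pr2 hn (a ⟨2*ν, by omega⟩) * pr2 hn (a ⟨2*ν+1, by omega⟩)
        + pr2 hn (a ⟨2*ν+1, by omega⟩) * pr2 hn (a ⟨2*ν+1, by omega⟩) = 0 := by
      have h := htail
      rw [e] at h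
      simp only [_root_.map_add, _root_.map_mul, hw, one_mul] at h
      linear_combination h
    have h2 : pr2 hn (a ⟨2*ν, by omega⟩) = 0 ∧ pr2 hn (a ⟨2*ν+1, by omega⟩) = 0 := by
      have hd : ∀ u v : ZMod 2, u * u + u * v + v * v = 0 → u = 0 ∧ v = 0 := by decide
      exact hd _ _ h1
    have hne : i = ⟨2*ν, by omega⟩ ∨ i = ⟨2*ν+1, by omega⟩ := by
      rcases (by omega : i.val = 2*ν ∨ i.val = 2*ν+1) with h | h <;>
        [left; right] <;> (apply Fin.ext; simp only [Fin.val_mk]; omega)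
    rcases hne with h | h <;> rw [h, isUnit_iff_pr2 hn] at hi
    · exact hi h2.1
    · exact hi h2.2

lemma bf_sub_right (a b c : Vec n ν δ) : bf z a (b - c) = bf z a b - bf z a c := by
  rw [sub_eq_add_neg, bf_add_right, bf_neg_right]; ring

lemma bf_sub_left (a b c : Vec n ν δ) : bf z (a - b) c = bf z a c - bf z b c := by
  rw [bf_symm, bf_sub_right, bf_symm c a, bf_symm c b]

/-- Eichler transvection attached to the isotropic basis vector `ee k`. -/
def Emap (z : ZMod (2^n)) (k : Fin (2*ν+δ)) (v : Vec n ν δ) (x : Vec n ν δ) : Vec n ν δ :=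
  x + x (pt k) • v - (bf z x v + x (pt k) * qf z v) • ee k

lemma Emap_apply (k : Fin (2*ν+δ)) (v x : Vec n ν δ) (i : Fin (2*ν+δ)) :
    Emap z k v x i = x i + x (pt k) * v i - (bf z x v + x (pt k) * qf z v) * ee k i := by
  simp [Emap]

lemma bf_ee_v (hν : 0 < ν) {k : Fin (2*ν+δ)} (hk : k.val < 2*ν) {v : Vec n ν δ}
    (hv : v (pt k) = 0) : bf z (ee k) v = 0 := by
  rw [bf_symm, bf_ee hν v k hk, hv]

lemma Emap_apply_pt (hν : 0 < ν) {k : Fin (2*ν+δ)} (hk : k.val < 2*ν) {v : Vec n ν δ}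
    (hv : v (pt k) = 0) (x : Vec n ν δ) : Emap z k v x (pt k) = x (pt k) := by
  rw [Emap_apply, hv, ee_apply_ne (pt_ne hν k hk)]
  ring

lemma Emap_add (k : Fin (2*ν+δ)) (v x y : Vec n ν δ) :
    Emap z k v (x + y) = Emap z k v x + Emap z k v y := by
  funext i
  simp only [Emap_apply, Pi.add_apply, bf_add_left]
  ring

lemma Emap_smul (k : Fin (2*ν+δ)) (v : Vec n ν δ) (c : ZMod (2^n)) (x : Vec n ν δ) :
    Emap z k v (c • x) = c • Emap z k v x := by
  funext i
  simp only [Emap_apply, Pi.smul_apply, smul_eq_mul, bf_smul_left]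
  ring

lemma Emap_q (hν : 0 < ν) {k : Fin (2*ν+δ)} (hk : k.val < 2*ν) {v : Vec n ν δ}
    (hv : v (pt k) = 0) (x : Vec n ν δ) : qf z (Emap z k v x) = qf z x := by
  have h1 : Emap z k v x
      = x + (x (pt k) • v - (bf z x v + x (pt k) * qf z v) • ee k) := add_sub_assoc _ _ _
  rw [h1, qf_add, qf_sub, qf_smul, qf_smul, bf_smul_left, bf_smul_right,
    bf_ee hν v k hk, hv, qf_ee hν k hk, bf_sub_right, bf_smul_right, bf_smul_right,
    bf_ee hν x k hk]
  ring

lemma Emap_inv (hν : 0 < ν) {k : Fin (2*ν+δ)} (hk : k.val < 2*ν) {v : Vec n ν δ}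
    (hv : v (pt k) = 0) (x : Vec n ν δ) : Emap z k (-v) (Emap z k v x) = x := by
  have hα : Emap z k v x (pt k) = x (pt k) := Emap_apply_pt hν hk hv x
  have hbf : bf z (Emap z k v x) (-v)
      = -(bf z x v) - 2 * (x (pt k) * qf z v) := by
    rw [bf_neg_right, Emap, bf_sub_left, bf_add_left, bf_smul_left, bf_smul_left,
      bf_ee_v hν hk hv, bf_self]
    ring
  have hq : qf z (-v) = qf z v := qf_neg v
  funext i
  rw [Emap_apply, hα, hbf, hq, Emap_apply]
  simp only [Pi.neg_apply]
  ring

lemma Emap_fix (hν : 0 < ν) {k : Fin (2*ν+δ)} (hk : k.val < 2*ν) {v : Vec n ν δ}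
    (hv : v (pt k) = 0) : Emap z k v (ee k) = ee k := by
  funext i
  rw [Emap_apply, ee_apply_ne (pt_ne hν k hk), bf_ee_v hν hk hv]
  ring

/-- The swap of coordinates `0` and `ν`. -/
def sw (hν : 0 < ν) (x : Vec n ν δ) : Vec n ν δ :=
  fun i => x (Equiv.swap (⟨0, by omega⟩ : Fin (2*ν+δ)) ⟨ν, by omega⟩ i)

lemma sw_invol (hν : 0 < ν) (x : Vec n ν δ) : sw hν (sw hν x) = x := by
  funext i
  simp [sw, Equiv.swap_apply_self]

lemma sw_add (hν : 0 < ν) (x y : Vec n ν δ) : sw hν (x + y) = sw hν x + sw hν y := by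
  funext i; simp [sw]

lemma sw_smul (hν : 0 < ν) (c : ZMod (2^n)) (x : Vec n ν δ) :
    sw hν (c • x) = c • sw hν x := by
  funext i; simp [sw]

lemma sw_fix (hν : 0 < ν) (x : Vec n ν δ) (j : Fin (2*ν+δ)) (h0 : j.val ≠ 0)
    (hj : j.val ≠ ν) : sw hν x j = x j := by
  rw [sw, Equiv.swap_apply_of_ne_of_ne]
  · intro h; rw [Fin.ext_iff] at h; simp only [Fin.val_mk] at h; omega
  · intro h; rw [Fin.ext_iff] at h; simp only [Fin.val_mk] at h; omega

lemma sw_q (hν : 0 < ν) (hδ : δ ≤ 2) (x : Vec n ν δ) : qf z (sw hν x) = qf z x := by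
  rw [q_eval hδ, q_eval hδ]
  congr 1
  · unfold hsum
    apply Finset.sum_congr rfl
    intro i hi
    rw [Finset.mem_range] at hi
    rw [dif_pos hi, dif_pos hi]
    rcases Nat.eq_zero_or_pos i with h0 | h0
    · subst h0
      have e2 : sw hν x ⟨(0:ℕ), by omega⟩ = x ⟨ν, by omega⟩ := by
        simp only [sw, Equiv.swap_apply_left]
      have e3 : sw hν x ⟨0 + ν, by omega⟩ = x ⟨(0:ℕ), by omega⟩ := by
        have h : (⟨0 + ν, by omega⟩ : Fin (2*ν+δ)) = ⟨ν, by omega⟩ := by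
          apply Fin.ext; simp
        rw [h]
        simp only [sw, Equiv.swap_apply_right]
      have e4 : x ⟨0 + ν, by omega⟩ = x ⟨ν, by omega⟩ := by
        have h : (⟨0 + ν, by omega⟩ : Fin (2*ν+δ)) = ⟨ν, by omega⟩ := by
          apply Fin.ext; simp
        rw [h]
      rw [e2, e3, e4]
      ring
    · rw [sw_fix hν x _ (by simp only [Fin.val_mk]; omega) (by simp only [Fin.val_mk]; omega),
        sw_fix hν x _ (by simp only [Fin.val_mk]; omega) (by simp only [Fin.val_mk]; omega)]
  · unfold tailq
    split_ifs with h1 h2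
    · rw [sw_fix hν x _ (by simp only [Fin.val_mk]; omega) (by simp only [Fin.val_mk]; omega)]
    · rw [sw_fix hν x ⟨2*ν, by omega⟩ (by simp only [Fin.val_mk]; omega) (by simp only [Fin.val_mk]; omega),
        sw_fix hν x ⟨2*ν+1, by omega⟩ (by simp only [Fin.val_mk]; omega) (by simp only [Fin.val_mk]; omega)]
    · rfl

/-- A `q`-isometry of the underlying free module. -/
structure Isom (n ν δ : ℕ) (z : ZMod (2^n)) where
  toFun : Vec n ν δ → Vec n ν δ
  invFun : Vec n ν δ → Vec n ν δ
  left_inv : ∀ x, invFun (toFun x) = x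
  right_inv : ∀ x, toFun (invFun x) = x
  map_add : ∀ x y, toFun (x + y) = toFun x + toFun y
  map_smul : ∀ (c : ZMod (2^n)) (x : Vec n ν δ), toFun (c • x) = c • toFun x
  map_q : ∀ x, qf z (toFun x) = qf z x

namespace Isom

variable {n ν δ : ℕ} {z : ZMod (2^n)} (T : Isom n ν δ z)

lemma inv_add (x y : Vec n ν δ) : T.invFun (x + y) = T.invFun x + T.invFun y := by
  have h := T.map_add (T.invFun x) (T.invFun y)
  rw [T.right_inv, T.right_inv] at h
  rw [← h, T.left_inv]

lemma inv_smul (c : ZMod (2^n)) (x : Vec n ν δ) : T.invFun (c • x) = c • T.invFun x := by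
  have h := T.map_smul c (T.invFun x)
  rw [T.right_inv] at h
  rw [← h, T.left_inv]

lemma inv_q (x : Vec n ν δ) : qf z (T.invFun x) = qf z x := by
  have h := T.map_q (T.invFun x)
  rw [T.right_inv] at h
  exact h.symm

def symm : Isom n ν δ z :=
  ⟨T.invFun, T.toFun, T.right_inv, T.left_inv, T.inv_add, T.inv_smul, T.inv_q⟩

lemma map_bf (x y : Vec n ν δ) : bf z (T.toFun x) (T.toFun y) = bf z x y := by
  have h2 := qf_add (z := z) (T.toFun x) (T.toFun y)
  rw [← T.map_add, T.map_q, T.map_q, T.map_q, qf_add (z := z) x y] at h2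
  linear_combination -h2

lemma unimod (hn : 0 < n) (x : Vec n ν δ) (hx : ∃ i, IsUnit (x i)) :
    ∃ i, IsUnit (T.toFun x i) := by
  by_contra h
  push_neg at h
  have h' : ∀ i, ¬ IsUnit (T.toFun x i) := fun i => by simpa using h i
  choose y hy using fun i => nonunit_eq_two_mul hn (h' i)
  have hT : T.toFun x = (2 : ZMod (2^n)) • y := by
    funext i
    rw [hy i]
    simp [smul_eq_mul]
  have hx2 : x = (2 : ZMod (2^n)) • T.invFun y := by
    conv_lhs => rw [← T.left_inv x, hT, T.inv_smul]
  obtain ⟨i, hi⟩ := hx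
  rw [hx2] at hi
  exact not_isUnit_two_mul hn _ (by simpa [smul_eq_mul] using hi)

def vmap (hn : 0 < n) (a : VertexRep n ν δ z) : VertexRep n ν δ z :=
  ⟨T.toFun a.1, T.unimod hn a.1 a.2.1, by
    have h : qf z (T.toFun a.1) = 0 := by
      rw [T.map_q]
      exact a.2.2
    exact h⟩

lemma vmap_resp (hn : 0 < n) {a b : VertexRep n ν δ z} (h : a ≈ b) :
    T.vmap hn a ≈ T.vmap hn b := by
  obtain ⟨u, hu⟩ := h
  exact ⟨u, by
    show T.toFun a.1 = (u : ZMod (2^n)) • T.toFun b.1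
    rw [hu, T.map_smul]⟩

def vequiv (hn : 0 < n) : Vertex n ν δ z ≃ Vertex n ν δ z where
  toFun := Quotient.map (T.vmap hn) (fun _ _ h => T.vmap_resp hn h)
  invFun := Quotient.map (T.symm.vmap hn) (fun _ _ h => T.symm.vmap_resp hn h)
  left_inv := by
    intro A
    induction A using Quotient.inductionOn with
    | h a =>
      show (⟦T.symm.vmap hn (T.vmap hn a)⟧ : Vertex n ν δ z) = ⟦a⟧
      exact congrArg _ (Subtype.ext (T.left_inv a.1))
  right_inv := by
    intro A
    induction A using Quotient.inductionOn with
    | h a =>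
      show (⟦T.vmap hn (T.symm.vmap hn a)⟧ : Vertex n ν δ z) = ⟦a⟧
      exact congrArg _ (Subtype.ext (T.right_inv a.1))

lemma vequiv_mk (hn : 0 < n) (a : VertexRep n ν δ z) :
    T.vequiv hn ⟦a⟧ = ⟦T.vmap hn a⟧ := rfl

lemma adjAux_mono (hn : 0 < n) {A B : Vertex n ν δ z} (h : adjAux n ν δ z A B) :
    adjAux n ν δ z (T.vequiv hn A) (T.vequiv hn B) := by
  obtain ⟨a, b, ha, hb, hu⟩ := h
  refine ⟨T.vmap hn a, T.vmap hn b, ?_, ?_, ?_⟩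
  · rw [← ha]; rfl
  · rw [← hb]; rfl
  · show IsUnit (bf z (T.toFun a.1) (T.toFun b.1))
    rw [T.map_bf]
    exact hu

lemma adj_mono (hn : 0 < n) {A B : Vertex n ν δ z} (h : (OGraph n ν δ z).Adj A B) :
    (OGraph n ν δ z).Adj (T.vequiv hn A) (T.vequiv hn B) := by
  obtain ⟨h1, h2⟩ := h
  constructor
  · intro hEq
    exact h1 ((T.vequiv hn).injective hEq)
  · rcases h2 with h2 | h2
    · exact Or.inl (T.adjAux_mono hn h2)
    · exact Or.inr (T.adjAux_mono hn h2)

lemma symm_vequiv (hn : 0 < n) (A : Vertex n ν δ z) :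
    T.symm.vequiv hn (T.vequiv hn A) = A := by
  induction A using Quotient.inductionOn with
  | h a =>
    show (⟦T.symm.vmap hn (T.vmap hn a)⟧ : Vertex n ν δ z) = ⟦a⟧
    exact congrArg _ (Subtype.ext (T.left_inv a.1))

def giso (hn : 0 < n) : OGraph n ν δ z ≃g OGraph n ν δ z where
  toEquiv := T.vequiv hn
  map_rel_iff' := by
    intro A B
    constructor
    · intro h
      have h2 := T.symm.adj_mono hn h
      rwa [T.symm_vequiv hn, T.symm_vequiv hn] at h2
    · exact T.adj_mono hn

lemma giso_mk (hn : 0 < n) (a : VertexRep n ν δ z) :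
    T.giso hn ⟦a⟧ = ⟦T.vmap hn a⟧ := rfl

end Isom

section Builders
variable {n ν δ : ℕ} {z : ZMod (2^n)}

def idIsom : Isom n ν δ z :=
  ⟨id, id, fun _ => rfl, fun _ => rfl, fun _ _ => rfl, fun _ _ => rfl, fun _ => rfl⟩

def swIsom (hν : 0 < ν) (hδ : δ ≤ 2) : Isom n ν δ z :=
  ⟨sw hν, sw hν, sw_invol hν, sw_invol hν, sw_add hν, sw_smul hν, sw_q hν hδ⟩

def emIsom (hν : 0 < ν) (k : Fin (2*ν+δ)) (hk : k.val < 2*ν) (v : Vec n ν δ)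
    (hv : v (pt k) = 0) : Isom n ν δ z :=
  ⟨Emap z k v, Emap z k (-v),
    Emap_inv hν hk hv,
    fun x => by
      have h := Emap_inv (z := z) hν hk (v := -v) (by simp [hv]) x
      rwa [neg_neg] at h,
    Emap_add k v, Emap_smul k v, Emap_q hν hk hv⟩

end Builders

section Construction
variable {n ν δ : ℕ} {z : ZMod (2^n)}

def i0 (hν : 0 < ν) : Fin (2*ν+δ) := ⟨0, by omega⟩
def iν (hν : 0 < ν) : Fin (2*ν+δ) := ⟨ν, by omega⟩

lemma i0_lt (hν : 0 < ν) : (i0 (δ := δ) hν).val < 2*ν := by simp [i0]; omega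
lemma iν_lt (hν : 0 < ν) : (iν (δ := δ) hν).val < 2*ν := by simp [iν]; omega

lemma pt_i0 (hν : 0 < ν) : pt (i0 (δ := δ) hν) = iν hν := by
  apply Fin.ext
  rw [pt_val]
  simp [i0, iν, hν]

lemma pt_iν (hν : 0 < ν) : pt (iν (δ := δ) hν) = i0 hν := by
  apply Fin.ext
  rw [pt_val]
  simp [i0, iν]
  omega

def stdRep (hν : 0 < ν) (k : Fin (2*ν+δ)) (hk : k.val < 2*ν) : VertexRep n ν δ z :=
  ⟨ee k, ⟨k, by rw [ee_apply_self]; exact isUnit_one⟩, qf_ee hν k hk⟩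

/-- The central normalization step: a vector `x` with `q x = 0` and `x (pt k) = 1`
is moved to `ee (pt k)` by a transvection based at `ee k`. -/
lemma normalize (hν : 0 < ν) (k : Fin (2*ν+δ)) (hk : k.val < 2*ν) (x : Vec n ν δ)
    (hq : qf z x = 0) (hx : x (pt k) = 1) :
    ∃ v : Vec n ν δ, v (pt k) = 0 ∧ Emap z k v x = ee (pt k) := by
  have hklt : (pt k).val < 2*ν := pt_lt k hk
  have hne : pt k ≠ k := pt_ne hν k hk
  have hne' : k ≠ pt k := fun h => hne h.symm
  have hpp : pt (pt k) = k := pt_pt k hk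
  refine ⟨x k • ee k + ee (pt k) - x, ?_, ?_⟩
  · simp only [Pi.sub_apply, Pi.add_apply, Pi.smul_apply, smul_eq_mul,
      ee_apply_ne hne, ee_apply_self, hx]
    ring
  · set v : Vec n ν δ := x k • ee k + ee (pt k) - x with hv
    have hbxv : bf z x v = 2 * x k := by
      rw [hv, bf_sub_right, bf_add_right, bf_smul_right, bf_ee hν x k hk,
        bf_ee hν x (pt k) hklt, hpp, bf_self, hq, hx]
      ring
    have hqv : qf z v = - x k := by
      rw [hv, qf_sub, qf_add, qf_smul, qf_ee hν k hk, qf_ee hν (pt k) hklt,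
        bf_smul_left, bf_ee hν (ee k) (pt k) hklt, hpp, ee_apply_self,
        bf_add_left, bf_smul_left, bf_symm (z := z) (ee k) x, bf_ee hν x k hk,
        bf_symm (z := z) (ee (pt k)) x, bf_ee hν x (pt k) hklt, hpp, hx, hq]
      ring
    funext i
    rw [Emap_apply, hbxv, hqv, hx]
    simp only [hv, Pi.sub_apply, Pi.add_apply, Pi.smul_apply, smul_eq_mul]
    ring

/-- Step I: some isometry makes the `ν`-th coordinate of a vertex representative a unit. -/
lemma stepI (hn : 0 < n) (hν : 0 < ν) (hδ : δ ≤ 2) (hz : IsUnit z)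
    (a : VertexRep n ν δ z) :
    ∃ T : Isom n ν δ z, IsUnit (T.toFun a.1 (iν hν)) := by
  by_cases hun : IsUnit (a.1 (iν hν))
  · exact ⟨idIsom, hun⟩
  · obtain ⟨j, hj2, hju⟩ := exists_unit_coord_s17 hn hν hδ hz a.1 a.2.1 a.2.2
    by_cases hj0 : j.val = 0
    · refine ⟨swIsom hν hδ, ?_⟩
      show IsUnit (sw hν a.1 (iν hν))
      have h1 : sw hν a.1 (iν hν) = a.1 (i0 hν) := by
        simp only [sw, iν, i0, Equiv.swap_apply_right]
      have h2 : (i0 (δ := δ) hν) = j := by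
        apply Fin.ext
        simp [i0]
        omega
      rw [h1, h2]
      exact hju
    · have hjν : j.val ≠ ν := by
        intro h
        exact hun (by rwa [show iν hν = j from Fin.ext (by simp [iν]; omega)])
      have hk2 : (pt j).val < 2*ν := pt_lt j hj2
      have hptk : pt (pt j) = j := pt_pt j hj2
      have hkν : (pt j).val ≠ ν := by
        rw [pt_val]
        split_ifs <;> omega
      have hvcond : (ee (iν hν) : Vec n ν δ) (pt (pt j)) = 0 := by
        rw [hptk]
        exact ee_apply_ne (by
          intro h
          rw [Fin.ext_iff] at h
          simp [iν] at h
          omega)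
      refine ⟨emIsom hν (pt j) hk2 (ee (iν hν)) hvcond, ?_⟩
      show IsUnit (Emap z (pt j) (ee (iν hν)) a.1 (iν hν))
      have hgoal : Emap z (pt j) (ee (iν hν)) a.1 (iν hν) = a.1 j + a.1 (iν hν) := by
        rw [Emap_apply, hptk, ee_apply_self, qf_ee hν (iν hν) (iν_lt hν),
          ee_apply_ne (by
            intro h
            rw [Fin.ext_iff] at h
            simp [iν] at h
            exact hkν h.symm)]
        ring
      rw [hgoal]
      exact isUnit_add_nonunit hn hju hun

end Construction

section Key
variable {n ν δ : ℕ} {z : ZMod (2^n)}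

lemma vmap_val (hn : 0 < n) (T : Isom n ν δ z) (a : VertexRep n ν δ z) :
    (T.vmap hn a).1 = T.toFun a.1 := rfl

/-- Key lemma: any arc can be moved to the standard arc `([e_ν], [e_0])`. -/
lemma arc_to_std (hn : 0 < n) (hν : 0 < ν) (hδ : δ ≤ 2) (hz : IsUnit z)
    (a c : VertexRep n ν δ z) (hbf : IsUnit (bf z a.1 c.1)) :
    ∃ φ : OGraph n ν δ z ≃g OGraph n ν δ z,
      φ ⟦a⟧ = ⟦stdRep hν (iν hν) (iν_lt hν)⟧ ∧ φ ⟦c⟧ = ⟦stdRep hν (i0 hν) (i0_lt hν)⟧ := by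
  classical
  obtain ⟨T1, h1⟩ := stepI hn hν hδ hz a
  set a1 := T1.vmap hn a with ha1
  set c1 := T1.vmap hn c with hc1
  have hbf1 : IsUnit (bf z a1.1 c1.1) := by
    rw [vmap_val, vmap_val, T1.map_bf]
    exact hbf
  set u := h1.unit with hu
  set x : Vec n ν δ := ((u⁻¹ : (ZMod (2^n))ˣ) : ZMod (2^n)) • a1.1 with hx
  have hxq : qf z x = 0 := by
    rw [hx, qf_smul, show qf z a1.1 = 0 from a1.2.2]
    ring
  have hxν : x (iν hν) = 1 := by
    rw [hx]
    simp only [Pi.smul_apply, smul_eq_mul]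
    rw [show a1.1 (iν hν) = (u : ZMod (2^n)) from (h1.unit_spec).symm]
    exact u.inv_mul
  obtain ⟨v, hv, hE⟩ := normalize hν (i0 hν) (i0_lt hν) x hxq (by rw [pt_i0]; exact hxν)
  rw [pt_i0] at hE
  set T2 : Isom n ν δ z := emIsom hν (i0 hν) (i0_lt hν) v hv with hT2
  set xrep : VertexRep n ν δ z := ⟨x, ⟨iν hν, by rw [hxν]; exact isUnit_one⟩, hxq⟩ with hxrep
  have hclass : (⟦xrep⟧ : Vertex n ν δ z) = ⟦a1⟧ := Quotient.sound ⟨u⁻¹, rfl⟩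
  have hT2x : T2.toFun x = ee (iν hν) := hE
  have hφ2a : (T2.giso hn) ⟦a1⟧ = ⟦stdRep hν (iν hν) (iν_lt hν)⟧ := by
    rw [← hclass, T2.giso_mk]
    exact congrArg _ (Subtype.ext hT2x)
  set c2 := T2.vmap hn c1 with hc2
  have hbf2 : IsUnit (c2.1 (i0 hν)) := by
    have e1 : bf z x c1.1 = ((u⁻¹ : (ZMod (2^n))ˣ) : ZMod (2^n)) * bf z a1.1 c1.1 := by
      rw [hx, bf_smul_left]
    have e2 : bf z (T2.toFun x) (T2.toFun c1.1) = bf z x c1.1 := T2.map_bf _ _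
    have e4 : bf z (ee (iν hν)) c2.1 = bf z x c1.1 := by
      rw [← hT2x, ← e2, vmap_val]
    have e5 : bf z c2.1 (ee (iν hν)) = c2.1 (pt (iν hν)) := bf_ee hν c2.1 (iν hν) (iν_lt hν)
    rw [show (i0 (δ := δ) hν) = pt (iν hν) from (pt_iν hν).symm, ← e5, bf_symm, e4, e1]
    exact (u⁻¹).isUnit.mul hbf1
  set w := hbf2.unit with hw
  set y : Vec n ν δ := ((w⁻¹ : (ZMod (2^n))ˣ) : ZMod (2^n)) • c2.1 with hy
  have hyq : qf z y = 0 := by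
    rw [hy, qf_smul, show qf z c2.1 = 0 from c2.2.2]
    ring
  have hy0 : y (i0 hν) = 1 := by
    rw [hy]
    simp only [Pi.smul_apply, smul_eq_mul]
    rw [show c2.1 (i0 hν) = (w : ZMod (2^n)) from (hbf2.unit_spec).symm]
    exact w.inv_mul
  obtain ⟨v2, hv2, hE2⟩ := normalize hν (iν hν) (iν_lt hν) y hyq (by rw [pt_iν]; exact hy0)
  rw [pt_iν] at hE2
  set T3 : Isom n ν δ z := emIsom hν (iν hν) (iν_lt hν) v2 hv2 with hT3
  set yrep : VertexRep n ν δ z := ⟨y, ⟨i0 hν, by rw [hy0]; exact isUnit_one⟩, hyq⟩ with hyrep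
  have hclass2 : (⟦yrep⟧ : Vertex n ν δ z) = ⟦c2⟧ := Quotient.sound ⟨w⁻¹, rfl⟩
  have hφ3c : (T3.giso hn) ⟦c2⟧ = ⟦stdRep hν (i0 hν) (i0_lt hν)⟧ := by
    rw [← hclass2, T3.giso_mk]
    exact congrArg _ (Subtype.ext (hE2 : T3.toFun y = ee (i0 hν)))
  have hφ3std : (T3.giso hn) ⟦stdRep hν (iν hν) (iν_lt hν)⟧
      = ⟦stdRep hν (iν hν) (iν_lt hν)⟧ := by
    rw [T3.giso_mk]
    exact congrArg _ (Subtype.ext (Emap_fix hν (iν_lt hν) hv2))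
  refine ⟨((T1.giso hn).trans (T2.giso hn)).trans (T3.giso hn), ?_, ?_⟩
  · show (T3.giso hn) ((T2.giso hn) ((T1.giso hn) ⟦a⟧)) = _
    rw [T1.giso_mk, ← ha1, hφ2a, hφ3std]
  · show (T3.giso hn) ((T2.giso hn) ((T1.giso hn) ⟦c⟧)) = _
    rw [T1.giso_mk, ← hc1, T2.giso_mk, ← hc2, hφ3c]

/-- Key lemma: any vertex can be moved to the standard vertex `[e_ν]`. -/
lemma vert_to_std (hn : 0 < n) (hν : 0 < ν) (hδ : δ ≤ 2) (hz : IsUnit z)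
    (a : VertexRep n ν δ z) :
    ∃ φ : OGraph n ν δ z ≃g OGraph n ν δ z,
      φ ⟦a⟧ = ⟦stdRep hν (iν hν) (iν_lt hν)⟧ := by
  classical
  obtain ⟨T1, h1⟩ := stepI hn hν hδ hz a
  set a1 := T1.vmap hn a with ha1
  set u := h1.unit with hu
  set x : Vec n ν δ := ((u⁻¹ : (ZMod (2^n))ˣ) : ZMod (2^n)) • a1.1 with hx
  have hxq : qf z x = 0 := by
    rw [hx, qf_smul, show qf z a1.1 = 0 from a1.2.2]
    ring
  have hxν : x (iν hν) = 1 := by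
    rw [hx]
    simp only [Pi.smul_apply, smul_eq_mul]
    rw [show a1.1 (iν hν) = (u : ZMod (2^n)) from (h1.unit_spec).symm]
    exact u.inv_mul
  obtain ⟨v, hv, hE⟩ := normalize hν (i0 hν) (i0_lt hν) x hxq (by rw [pt_i0]; exact hxν)
  rw [pt_i0] at hE
  set T2 : Isom n ν δ z := emIsom hν (i0 hν) (i0_lt hν) v hv with hT2
  set xrep : VertexRep n ν δ z := ⟨x, ⟨iν hν, by rw [hxν]; exact isUnit_one⟩, hxq⟩ with hxrep
  have hclass : (⟦xrep⟧ : Vertex n ν δ z) = ⟦a1⟧ := Quotient.sound ⟨u⁻¹, rfl⟩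
  have hφ2a : (T2.giso hn) ⟦a1⟧ = ⟦stdRep hν (iν hν) (iν_lt hν)⟧ := by
    rw [← hclass, T2.giso_mk]
    exact congrArg _ (Subtype.ext (hE : T2.toFun x = ee (iν hν)))
  refine ⟨(T1.giso hn).trans (T2.giso hn), ?_⟩
  show (T2.giso hn) ((T1.giso hn) ⟦a⟧) = _
  rw [T1.giso_mk, ← ha1, hφ2a]

lemma adj_reps {A C : Vertex n ν δ z} (h : (OGraph n ν δ z).Adj A C) :
    ∃ a c : VertexRep n ν δ z, (⟦a⟧ : Vertex n ν δ z) = A ∧ (⟦c⟧ : Vertex n ν δ z) = C ∧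
      IsUnit (bf z a.1 c.1) := by
  obtain ⟨-, h2 | h2⟩ := h
  · obtain ⟨a, c, ha, hc, hu⟩ := h2
    exact ⟨a, c, ha, hc, hu⟩
  · obtain ⟨c, a, hc, ha, hu⟩ := h2
    exact ⟨a, c, ha, hc, by rw [bf_symm]; exact hu⟩

end Key

theorem arc_transitive (n ν δ : ℕ) (hn : 0 < n) (hν : 0 < ν) (hδ : δ ≤ 2)
    (z : ZMod (2^n)) (hz : IsUnit z) :
    (∀ A C B D : Vertex n ν δ z,
      (OGraph n ν δ z).Adj A C → (OGraph n ν δ z).Adj B D →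
      ∃ φ : OGraph n ν δ z ≃g OGraph n ν δ z, φ A = B ∧ φ C = D) ∧
    (∀ A B : Vertex n ν δ z,
      ∃ φ : OGraph n ν δ z ≃g OGraph n ν δ z, φ A = B) := by
  constructor
  · intro A C B D hAC hBD
    obtain ⟨a, c, ha, hc, hu1⟩ := adj_reps hAC
    obtain ⟨b, d, hb, hd, hu2⟩ := adj_reps hBD
    obtain ⟨φ1, hφ1a, hφ1c⟩ := arc_to_std hn hν hδ hz a c hu1
    obtain ⟨φ2, hφ2b, hφ2d⟩ := arc_to_std hn hν hδ hz b d hu2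
    refine ⟨φ1.trans φ2.symm, ?_, ?_⟩
    · show φ2.symm (φ1 A) = B
      rw [← ha, ← hb, hφ1a, ← hφ2b]
      exact φ2.symm_apply_apply _
    · show φ2.symm (φ1 C) = D
      rw [← hc, ← hd, hφ1c, ← hφ2d]
      exact φ2.symm_apply_apply _
  · intro A B
    obtain ⟨a, ha⟩ := Quotient.exists_rep A
    obtain ⟨b, hb⟩ := Quotient.exists_rep B
    obtain ⟨φ1, hφ1a⟩ := vert_to_std hn hν hδ hz a
    obtain ⟨φ2, hφ2b⟩ := vert_to_std hn hν hδ hz b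
    refine ⟨φ1.trans φ2.symm, ?_⟩
    show φ2.symm (φ1 A) = B
    rw [← ha, ← hb, hφ1a, ← hφ2b]
    exact φ2.symm_apply_apply _


end Ortho
end

section
/- The map sending a vertex [a] of 𝒪^{(2ν+δ)}_{2ⁿ} to [π(a)] is a well-defined surjective graph homomorphism onto 𝒪^{(2ν+δ)}_2, and it is a 'covering' in the sense that [a] ~ [b] in 𝒪^{(2ν+δ)}_{2ⁿ} if and only if [π(a)] ~ [π(b)] in 𝒪^{(2ν+δ)}_2. -/
namespace Ortho
open Matrix



lemma zmod2_em : ∀ x : ZMod (2^1), x = 0 ∨ x = 1 := by decide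

lemma zmod2_two : (2 : ZMod (2^1)) = 0 := by decide

lemma zmod2_one_ne_zero : (1 : ZMod (2^1)) ≠ 0 := by decide

lemma zmod2_unit_eq_one {x : ZMod (2^1)} (h : IsUnit x) : x = 1 := by
  rcases zmod2_em x with h0 | h1
  · subst h0
    rw [isUnit_zero_iff] at h
    exact absurd h (by decide)
  · exact h1

lemma zmod2_isUnit_iff {x : ZMod (2^1)} : IsUnit x ↔ x = 1 :=
  ⟨zmod2_unit_eq_one, fun h => h ▸ isUnit_one⟩

lemma units_zmod2_val (u : (ZMod (2^1))ˣ) : (u : ZMod (2^1)) = 1 :=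
  zmod2_unit_eq_one u.isUnit

lemma isUnit_iff_cast (hn : 0 < n) (x : ZMod (2^n)) :
    IsUnit x ↔ IsUnit (ZMod.castHom (pow_dvd_pow 2 hn) (ZMod (2^1)) x) := by
  constructor
  · exact fun h => h.map _
  · intro h
    have hx : x = ((x.val : ℕ) : ZMod (2^n)) := by
      rw [ZMod.natCast_val, ZMod.cast_id]
    have hφ : (ZMod.castHom (pow_dvd_pow 2 hn) (ZMod (2^1)) x)
        = ((x.val : ℕ) : ZMod (2^1)) := by
      rw [ZMod.castHom_apply, ZMod.natCast_val]
    rw [hφ, ZMod.isUnit_iff_coprime] at h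
    rw [hx, ZMod.isUnit_iff_coprime]
    have h2 : Nat.Coprime x.val 2 := by
      simpa [Nat.coprime_pow_right_iff (by norm_num : 0 < 1)] using h
    exact Nat.Coprime.pow_right _ h2

lemma cast_eq_zero_two_dvd (hn : 0 < n) (x : ZMod (2^n))
    (h : ZMod.castHom (pow_dvd_pow 2 hn) (ZMod (2^1)) x = 0) :
    ∃ c : ZMod (2^n), x = 2 * c := by
  have hφ : (ZMod.castHom (pow_dvd_pow 2 hn) (ZMod (2^1)) x)
      = ((x.val : ℕ) : ZMod (2^1)) := by
    rw [ZMod.castHom_apply, ZMod.natCast_val]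
  rw [hφ, ZMod.natCast_eq_zero_iff] at h
  obtain ⟨d, hd⟩ := h
  refine ⟨(d : ZMod (2^n)), ?_⟩
  have hx : x = ((x.val : ℕ) : ZMod (2^n)) := by
    rw [ZMod.natCast_val, ZMod.cast_id]
  rw [hx, hd]
  push_cast
  ring



lemma hensel {R : Type*} [CommRing R] (m q : R) (u : Rˣ) :
    ∀ k : ℕ, ∃ t : R, (2:R)^k ∣ m + t*(u:R) + 2*t^2*q := by
  intro k
  induction k with
  | zero => exact ⟨0, by simpa using one_dvd _⟩
  | succ k ih =>
    obtain ⟨t, c, hc⟩ := ih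
    set s : R := -(c * ((u⁻¹ : Rˣ) : R)) with hs
    refine ⟨t + 2^k * s, (s * ((t + 2^k * s) + t) * q), ?_⟩
    have hw : (u : R) * ((u⁻¹ : Rˣ) : R) = 1 := u.mul_inv
    rw [pow_succ]
    linear_combination hc - 2^k*c*hw

lemma expandQ {R : Type*} [CommRing R] {N : ℕ} (G : Matrix (Fin N) (Fin N) R)
    (x v : Fin N → R) (s : R) :
    (x + s • v) ⬝ᵥ G *ᵥ (x + s • v)
      = x ⬝ᵥ G *ᵥ x + s * (v ⬝ᵥ (G + Gᵀ) *ᵥ x) + s^2 * (v ⬝ᵥ G *ᵥ v) := by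
  have h : x ⬝ᵥ G *ᵥ v = v ⬝ᵥ Gᵀ *ᵥ x := by
    rw [mulVec_transpose, dotProduct_mulVec, dotProduct_comm]
  simp only [mulVec_add, mulVec_smul, dotProduct_add, add_dotProduct, add_mulVec,
    dotProduct_smul, smul_dotProduct, smul_eq_mul]
  linear_combination (s : R) * h



lemma Gmat_map {n ν δ : ℕ} (hn : 0 < n) (z : ZMod (2^n)) :
    (Gmat n ν δ z).map (ZMod.castHom (pow_dvd_pow 2 hn) (ZMod (2^1)))
      = Gmat 1 ν δ (ZMod.castHom (pow_dvd_pow 2 hn) (ZMod (2^1)) z) := by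
  ext i j
  simp only [Gmat, Matrix.map_apply, Matrix.of_apply]
  split_ifs <;> first | exact map_one _ | exact map_zero _ | rfl

lemma pair_row {N : ℕ} (Gb : Matrix (Fin N) (Fin N) (ZMod (2^1)))
    (b : Fin N → ZMod (2^1)) (i j : Fin N)
    (h1 : Gb i j + Gb j i = 1) (h2 : ∀ k, k ≠ j → Gb i k + Gb k i = 0) :
    Pi.single i (1:ZMod (2^1)) ⬝ᵥ (Gb + Gbᵀ) *ᵥ b = b j := by
  rw [single_dotProduct, one_mul]
  have hrow : ((Gb + Gbᵀ) *ᵥ b) i = ∑ k, (Gb i k + Gb k i) * b k := by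
    simp [mulVec, dotProduct, Matrix.add_apply, Matrix.transpose_apply]
  rw [hrow, Finset.sum_eq_single j (fun k _ hk => by rw [h2 k hk, zero_mul]) (by simp),
    h1, one_mul]

section PairLemmas

variable {ν δ : ℕ}

lemma pairA (w : ZMod (2^1)) (b : Fin (2*ν+δ) → ZMod (2^1)) (i j : Fin (2*ν+δ))
    (hj : j.val < ν) (hi : i.val = j.val + ν) :
    Pi.single i (1:ZMod (2^1)) ⬝ᵥ (Gmat 1 ν δ w + (Gmat 1 ν δ w)ᵀ) *ᵥ b = b j := by
  refine pair_row _ b i j ?_ ?_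
  · simp only [Gmat, Matrix.of_apply]
    split_ifs <;> (first | omega | norm_num | simp_all)
  · intro k hk
    have hk' : k.val ≠ j.val := fun h => hk (Fin.ext h)
    simp only [Gmat, Matrix.of_apply]
    split_ifs <;> (first | omega | norm_num | simp_all)

lemma pairB (w : ZMod (2^1)) (b : Fin (2*ν+δ) → ZMod (2^1)) (i j : Fin (2*ν+δ))
    (hi : i.val < ν) (hj : j.val = i.val + ν) :
    Pi.single i (1:ZMod (2^1)) ⬝ᵥ (Gmat 1 ν δ w + (Gmat 1 ν δ w)ᵀ) *ᵥ b = b j := by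
  refine pair_row _ b i j ?_ ?_
  · simp only [Gmat, Matrix.of_apply]
    split_ifs <;> (first | omega | norm_num | simp_all)
  · intro k hk
    have hk' : k.val ≠ j.val := fun h => hk (Fin.ext h)
    simp only [Gmat, Matrix.of_apply]
    split_ifs <;> (first | omega | norm_num | simp_all)

lemma pairC (hδ2 : δ = 2) (w : ZMod (2^1)) (b : Fin (2*ν+δ) → ZMod (2^1))
    (i j : Fin (2*ν+δ)) (hj : j.val = 2*ν) (hi : i.val = 2*ν+1) :
    Pi.single i (1:ZMod (2^1)) ⬝ᵥ (Gmat 1 ν δ w + (Gmat 1 ν δ w)ᵀ) *ᵥ b = b j := by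
  refine pair_row _ b i j ?_ ?_
  · simp only [Gmat, Matrix.of_apply]
    split_ifs <;> (first | omega | norm_num | simp_all)
  · intro k hk
    have hk' : k.val ≠ j.val := fun h => hk (Fin.ext h)
    simp only [Gmat, Matrix.of_apply]
    split_ifs <;>
      (first | omega | (rw [← two_mul, zmod2_two, zero_mul]) | norm_num | simp_all)

lemma pairD (hδ2 : δ = 2) (w : ZMod (2^1)) (b : Fin (2*ν+δ) → ZMod (2^1))
    (i j : Fin (2*ν+δ)) (hj : j.val = 2*ν+1) (hi : i.val = 2*ν) :
    Pi.single i (1:ZMod (2^1)) ⬝ᵥ (Gmat 1 ν δ w + (Gmat 1 ν δ w)ᵀ) *ᵥ b = b j := by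
  refine pair_row _ b i j ?_ ?_
  · simp only [Gmat, Matrix.of_apply]
    split_ifs <;> (first | omega | norm_num | simp_all)
  · intro k hk
    have hk' : k.val ≠ j.val := fun h => hk (Fin.ext h)
    simp only [Gmat, Matrix.of_apply]
    split_ifs <;>
      (first | omega | (rw [← two_mul, zmod2_two, zero_mul]) | norm_num | simp_all)

end PairLemmas
lemma delta1_unit_lt {ν : ℕ} (hν : 0 < ν) (w : ZMod (2^1))
    (b : Fin (2*ν+1) → ZMod (2^1))
    (hiso : b ⬝ᵥ (Gmat 1 ν 1 w) *ᵥ b = 0) (hex : ∃ i, IsUnit (b i)) :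
    ∃ j : Fin (2*ν+1), j.val < 2*ν ∧ IsUnit (b j) := by
  by_contra hcon
  push_neg at hcon
  have hzero : ∀ j : Fin (2*ν+1), j.val < 2*ν → b j = 0 := by
    intro j hj
    rcases zmod2_em (b j) with h0 | h1
    · exact h0
    · exact absurd (h1 ▸ isUnit_one) (hcon j hj)
  set i0 : Fin (2*ν+1) := ⟨2*ν, by omega⟩ with hi0
  obtain ⟨i, hi⟩ := hex
  have hival : i = i0 := by
    by_contra hne
    have hlt : i.val < 2*ν := by
      have := i.isLt
      have hne' : i.val ≠ 2*ν := fun h => hne (Fin.ext h)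
      omega
    exact (hcon i hlt) hi
  subst hival
  have hb1 : b i0 = 1 := zmod2_unit_eq_one hi
  have hinner : ((Gmat 1 ν 1 w) *ᵥ b) i0 = 1 := by
    have : ((Gmat 1 ν 1 w) *ᵥ b) i0 = ∑ k, Gmat 1 ν 1 w i0 k * b k := by
      simp [mulVec, dotProduct]
    rw [this, Finset.sum_eq_single i0]
    · have hG : Gmat 1 ν 1 w i0 i0 = 1 := by
        simp only [Gmat, Matrix.of_apply, hi0]
        split_ifs <;> (try omega) <;> (try norm_num) <;> simp_all
      rw [hG, hb1, one_mul]
    · intro k _ hk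
      have hk' : k.val < 2*ν := by
        have := k.isLt
        have : k.val ≠ 2*ν := fun h => hk (Fin.ext (by simp [hi0, h]))
        omega
      rw [hzero k hk', mul_zero]
    · simp
  have hQ : b ⬝ᵥ (Gmat 1 ν 1 w) *ᵥ b = 1 := by
    have hsum : b ⬝ᵥ (Gmat 1 ν 1 w) *ᵥ b = ∑ k, b k * ((Gmat 1 ν 1 w) *ᵥ b) k := by
      simp [dotProduct]
    rw [hsum, Finset.sum_eq_single i0]
    · rw [hb1, hinner, one_mul]
    · intro k _ hk
      have hk' : k.val < 2*ν := by
        have := k.isLt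
        have : k.val ≠ 2*ν := fun h => hk (Fin.ext (by simp [hi0, h]))
        omega
      rw [hzero k hk', zero_mul]
    · simp
  rw [hiso] at hQ
  exact zmod2_one_ne_zero hQ.symm

lemma good_pair {ν δ : ℕ} (hν : 0 < ν) (hδ : δ ≤ 2) (w : ZMod (2^1))
    (b : Fin (2*ν+δ) → ZMod (2^1))
    (hiso : b ⬝ᵥ (Gmat 1 ν δ w) *ᵥ b = 0) (hex : ∃ i, IsUnit (b i)) :
    ∃ (i j : Fin (2*ν+δ)), IsUnit (b j) ∧
      Pi.single i (1:ZMod (2^1)) ⬝ᵥ (Gmat 1 ν δ w + (Gmat 1 ν δ w)ᵀ) *ᵥ b = b j := by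
  have hj : ∃ j : Fin (2*ν+δ), IsUnit (b j) ∧ (j.val < 2*ν ∨ δ = 2) := by
    rcases Nat.lt_or_ge δ 1 with h0 | h1
    · obtain ⟨j, hj⟩ := hex
      exact ⟨j, hj, Or.inl (by have := j.isLt; omega)⟩
    · rcases Nat.lt_or_ge δ 2 with h1' | h2
      · have hδ1 : δ = 1 := by omega
        subst hδ1
        obtain ⟨j, hjlt, hju⟩ := delta1_unit_lt hν w b hiso hex
        exact ⟨j, hju, Or.inl hjlt⟩
      · have hδ2 : δ = 2 := by omega
        obtain ⟨j, hj⟩ := hex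
        exact ⟨j, hj, Or.inr hδ2⟩
  obtain ⟨j, hju, hjc⟩ := hj
  rcases Nat.lt_or_ge j.val ν with hlt | hge
  · exact ⟨⟨j.val + ν, by omega⟩, j, hju, pairA w b _ j hlt rfl⟩
  · rcases Nat.lt_or_ge j.val (2*ν) with hlt2 | hge2
    · refine ⟨⟨j.val - ν, by omega⟩, j, hju, pairB w b _ j (by show j.val - ν < ν; omega) (by show j.val = j.val - ν + ν; omega)⟩
    · have hδ2 : δ = 2 := by
        rcases hjc with h | h
        · omega
        · exact h
      have hjb := j.isLt
      rcases Nat.lt_or_ge j.val (2*ν+1) with hlt3 | hge3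
      · exact ⟨⟨2*ν+1, by omega⟩, j, hju, pairC hδ2 w b _ j (by omega) rfl⟩
      · exact ⟨⟨2*ν, by omega⟩, j, hju, pairD hδ2 w b _ j (by omega) rfl⟩
lemma map_quad {R S : Type*} [CommRing R] [CommRing S] {N : ℕ} (f : R →+* S)
    (M : Matrix (Fin N) (Fin N) R) (x y : Fin N → R) :
    f (x ⬝ᵥ M *ᵥ y) = (f ∘ x) ⬝ᵥ (M.map f) *ᵥ (f ∘ y) := by
  rw [RingHom.map_dotProduct]
  congr 1
  funext i
  exact RingHom.map_mulVec f M y i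

lemma GGt_map {n ν δ : ℕ} (hn : 0 < n) (z : ZMod (2^n)) :
    (Gmat n ν δ z + (Gmat n ν δ z)ᵀ).map (ZMod.castHom (pow_dvd_pow 2 hn) (ZMod (2^1)))
      = Gmat 1 ν δ (ZMod.castHom (pow_dvd_pow 2 hn) (ZMod (2^1)) z)
        + (Gmat 1 ν δ (ZMod.castHom (pow_dvd_pow 2 hn) (ZMod (2^1)) z))ᵀ := by
  rw [Matrix.map_add _ (fun a b => _root_.map_add _ a b), Matrix.transpose_map, Gmat_map hn z]

lemma lift_rep {n ν δ : ℕ} (hn : 0 < n) (hν : 0 < ν) (hδ : δ ≤ 2) (z : ZMod (2^n))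
    (b : VertexRep 1 ν δ (ZMod.castHom (pow_dvd_pow 2 hn) (ZMod (2^1)) z)) :
    ∃ a : VertexRep n ν δ z,
      (fun i => ZMod.castHom (pow_dvd_pow 2 hn) (ZMod (2^1)) ((a : Vec n ν δ) i))
        = (b : Vec 1 ν δ) := by
  obtain ⟨bv, ⟨hbex, hbiso⟩⟩ := b
  simp only
  set φ : ZMod (2^n) →+* ZMod (2^1) := ZMod.castHom (pow_dvd_pow 2 hn) (ZMod (2^1)) with hφ
  set G : Matrix (Fin (2*ν+δ)) (Fin (2*ν+δ)) (ZMod (2^n)) := Gmat n ν δ z with hG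
  set Gb : Matrix (Fin (2*ν+δ)) (Fin (2*ν+δ)) (ZMod (2^1)) := Gmat 1 ν δ (φ z) with hGb
  have hGm : G.map φ = Gb := Gmat_map hn z
  -- the naive coordinatewise lift
  set a₀ : Vec n ν δ := fun i => (((bv i).val : ℕ) : ZMod (2^n)) with ha₀
  have hcast : (fun k => φ (a₀ k)) = bv := by
    funext k
    show φ (((bv k).val : ℕ) : ZMod (2^n)) = bv k
    rw [map_natCast φ, ZMod.natCast_val, ZMod.cast_id]
  -- the isotropy defect is divisible by 2
  have hQ0 : φ (a₀ ⬝ᵥ G *ᵥ a₀) = 0 := by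
    rw [map_quad, hGm]
    show (fun k => φ (a₀ k)) ⬝ᵥ Gb *ᵥ (fun k => φ (a₀ k)) = 0
    rw [hcast]
    exact hbiso
  obtain ⟨m', hm'⟩ := cast_eq_zero_two_dvd hn _ hQ0
  -- a good direction
  obtain ⟨iv, j, hju, hpair⟩ := good_pair hν hδ (φ z) bv hbiso hbex
  set v : Vec n ν δ := Pi.single iv (1 : ZMod (2^n)) with hv
  have hφv : (fun k => φ (v k)) = Pi.single iv (1 : ZMod (2^1)) := by
    funext k
    rcases eq_or_ne k iv with rfl | hk
    · simp [hv]
    · simp [hv, Pi.single_eq_of_ne hk]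
  set u : ZMod (2^n) := v ⬝ᵥ (G + Gᵀ) *ᵥ a₀ with hu
  have hucast : φ u = bv j := by
    rw [hu, map_quad, GGt_map hn z]
    show (fun k => φ (v k)) ⬝ᵥ (Gb + Gbᵀ) *ᵥ (fun k => φ (a₀ k)) = bv j
    rw [hcast, hφv]
    exact hpair
  have huu : IsUnit u := by
    rw [isUnit_iff_cast hn, hucast]
    exact hju
  -- Hensel lifting
  set q : ZMod (2^n) := v ⬝ᵥ G *ᵥ v with hq
  obtain ⟨t, d, hd⟩ := hensel m' q huu.unit (n-1)
  rw [IsUnit.unit_spec] at hd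
  set a : Vec n ν δ := a₀ + (2*t) • v with ha
  have hacast : (fun k => φ (a k)) = bv := by
    funext k
    have : a k = a₀ k + (2*t) * v k := rfl
    rw [this, _root_.map_add, _root_.map_mul, _root_.map_mul]
    have h2 : φ 2 = 0 := by
      rw [map_ofNat]
      exact zmod2_two
    rw [h2, zero_mul, zero_mul, add_zero]
    exact congrFun hcast k
  have haiso : a ⬝ᵥ G *ᵥ a = 0 := by
    have hexp := expandQ G a₀ v (2*t)
    rw [← ha, ← hu, ← hq] at hexp
    have h2n : (2 : ZMod (2^n)) ^ n = 0 := by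
      have := ZMod.natCast_self (2^n)
      push_cast at this
      exact this
    have hsplit : (2:ZMod (2^n))^n = 2 * 2^(n-1) := by
      rw [← pow_succ']
      congr 1
      omega
    rw [hsplit] at h2n
    linear_combination hexp + hm' + 2*hd + d*h2n
  refine ⟨⟨a, ⟨⟨j, ?_⟩, haiso⟩⟩, ?_⟩
  · rw [isUnit_iff_cast hn]
    have hj : φ (a j) = bv j := congrFun hacast j
    rw [show ZMod.castHom (pow_dvd_pow 2 hn) (ZMod (2^1)) (a j) = φ (a j) from rfl, hj]
    exact hju
  · exact hacast
/-- The reduction of a vertex representative mod 2. -/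
def push {n ν δ : ℕ} (hn : 0 < n) (z : ZMod (2^n)) (a : VertexRep n ν δ z) :
    VertexRep 1 ν δ (ZMod.castHom (pow_dvd_pow 2 hn) (ZMod (2^1)) z) :=
  ⟨fun i => ZMod.castHom (pow_dvd_pow 2 hn) (ZMod (2^1)) ((a : Vec n ν δ) i),
   by
    obtain ⟨i, hi⟩ := a.2.1
    exact ⟨i, hi.map _⟩,
   by
    have h := map_quad (ZMod.castHom (pow_dvd_pow 2 hn) (ZMod (2^1))) (Gmat n ν δ z) a.1 a.1
    rw [a.2.2, map_zero, Gmat_map hn z] at h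
    exact h.symm⟩

lemma push_pairing {n ν δ : ℕ} (hn : 0 < n) (z : ZMod (2^n)) (a b : VertexRep n ν δ z) :
    ZMod.castHom (pow_dvd_pow 2 hn) (ZMod (2^1))
        ((a : Vec n ν δ) ⬝ᵥ (Gmat n ν δ z + (Gmat n ν δ z)ᵀ) *ᵥ (b : Vec n ν δ))
      = ((push hn z a : Vec 1 ν δ)
          ⬝ᵥ (Gmat 1 ν δ (ZMod.castHom (pow_dvd_pow 2 hn) (ZMod (2^1)) z)
              + (Gmat 1 ν δ (ZMod.castHom (pow_dvd_pow 2 hn) (ZMod (2^1)) z))ᵀ)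
            *ᵥ (push hn z b : Vec 1 ν δ)) := by
  have h := map_quad (ZMod.castHom (pow_dvd_pow 2 hn) (ZMod (2^1)))
    (Gmat n ν δ z + (Gmat n ν δ z)ᵀ) a.1 b.1
  rw [GGt_map hn z] at h
  exact h

lemma push_resp {n ν δ : ℕ} (hn : 0 < n) (z : ZMod (2^n)) :
    ∀ a b : VertexRep n ν δ z, (vsetoid n ν δ z).r a b →
      (vsetoid 1 ν δ (ZMod.castHom (pow_dvd_pow 2 hn) (ZMod (2^1)) z)).r
        (push hn z a) (push hn z b) := by
  rintro a b ⟨u, hab⟩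
  refine ⟨Units.map (ZMod.castHom (pow_dvd_pow 2 hn) (ZMod (2^1))).toMonoidHom u, ?_⟩
  funext i
  show ZMod.castHom (pow_dvd_pow 2 hn) (ZMod (2^1)) (a.1 i)
    = _ * ZMod.castHom (pow_dvd_pow 2 hn) (ZMod (2^1)) (b.1 i)
  rw [show a.1 i = (u : ZMod (2^n)) * b.1 i from congrFun hab i, _root_.map_mul]
  rfl

/-- Mod 2, every representative equivalent to `push a` is literally `push a`. -/
lemma eq_of_equiv_two {ν δ : ℕ} {w : ZMod (2^1)} (c d : VertexRep 1 ν δ w)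
    (h : (vsetoid 1 ν δ w).r c d) : (c : Vec 1 ν δ) = (d : Vec 1 ν δ) := by
  obtain ⟨u, hu⟩ := h
  rw [hu, units_zmod2_val u, one_smul]

lemma pairing_self_two {ν δ : ℕ} {w : ZMod (2^1)} (c : VertexRep 1 ν δ w) :
    (c : Vec 1 ν δ) ⬝ᵥ (Gmat 1 ν δ w + (Gmat 1 ν δ w)ᵀ) *ᵥ (c : Vec 1 ν δ) = 0 := by
  have hsymm : c.1 ⬝ᵥ (Gmat 1 ν δ w)ᵀ *ᵥ c.1 = c.1 ⬝ᵥ (Gmat 1 ν δ w) *ᵥ c.1 := by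
    rw [mulVec_transpose, dotProduct_mulVec, dotProduct_comm]
  rw [add_mulVec, dotProduct_add, hsymm, c.2.2, add_zero]

theorem reduction_covering (n ν δ : ℕ) (hn : 0 < n) (hν : 0 < ν) (hδ : δ ≤ 2)
    (z : ZMod (2^n)) (hz : IsUnit z) :
    ∃ f : Vertex n ν δ z →
        Vertex 1 ν δ (ZMod.castHom (pow_dvd_pow 2 hn) (ZMod (2^1)) z),
      Function.Surjective f ∧
      (∀ a : VertexRep n ν δ z,
        ∃ b : VertexRep 1 ν δ (ZMod.castHom (pow_dvd_pow 2 hn) (ZMod (2^1)) z),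
          (b : Vec 1 ν δ) =
            (fun i => ZMod.castHom (pow_dvd_pow 2 hn) (ZMod (2^1)) ((a : Vec n ν δ) i)) ∧
          f ⟦a⟧ = ⟦b⟧) ∧
      (∀ A B : Vertex n ν δ z, (OGraph n ν δ z).Adj A B ↔
        (OGraph 1 ν δ (ZMod.castHom (pow_dvd_pow 2 hn) (ZMod (2^1)) z)).Adj (f A) (f B)) := by
  classical
  refine ⟨Quotient.map (push hn z) (push_resp hn z), ?_, ?_, ?_⟩
  · -- surjectivity
    intro B
    obtain ⟨b, rfl⟩ := Quotient.exists_rep B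
    obtain ⟨a, ha⟩ := lift_rep hn hν hδ z b
    refine ⟨⟦a⟧, ?_⟩
    rw [Quotient.map_mk]
    exact congrArg _ (Subtype.ext ha)
  · -- compatibility with representatives
    intro a
    exact ⟨push hn z a, rfl, Quotient.map_mk _ _ _⟩
  · -- covering of adjacency
    intro A B
    obtain ⟨a, rfl⟩ := Quotient.exists_rep A
    obtain ⟨b, rfl⟩ := Quotient.exists_rep B
    have hmk : ∀ c : VertexRep n ν δ z,
        Quotient.map (push hn z) (push_resp hn z) ⟦c⟧
          = (⟦push hn z c⟧ : Vertex 1 ν δ (ZMod.castHom (pow_dvd_pow 2 hn) (ZMod (2^1)) z)) :=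
      fun c => Quotient.map_mk _ _ _
    have key : ∀ x y : VertexRep n ν δ z,
        (⟦push hn z x⟧ : Vertex 1 ν δ (ZMod.castHom (pow_dvd_pow 2 hn) (ZMod (2^1)) z))
            = ⟦push hn z y⟧ →
        IsUnit ((x : Vec n ν δ) ⬝ᵥ (Gmat n ν δ z + (Gmat n ν δ z)ᵀ) *ᵥ (y : Vec n ν δ)) →
        False := by
      intro x y hq hu
      have hu' := (ZMod.castHom (pow_dvd_pow 2 hn) (ZMod (2^1))).isUnit_map hu
      rw [push_pairing hn z x y] at hu'
      have hsame : (push hn z x : Vec 1 ν δ) = (push hn z y : Vec 1 ν δ) :=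
        eq_of_equiv_two _ _ (Quotient.exact hq)
      rw [hsame, pairing_self_two] at hu'
      rw [isUnit_zero_iff] at hu'
      exact zmod2_one_ne_zero hu'.symm
    have bwd : ∀ x y : VertexRep n ν δ z,
        adjAux 1 ν δ (ZMod.castHom (pow_dvd_pow 2 hn) (ZMod (2^1)) z)
          ⟦push hn z x⟧ ⟦push hn z y⟧ → adjAux n ν δ z ⟦x⟧ ⟦y⟧ := by
      rintro x y ⟨c, d, hc, hd, hu⟩
      have hc' : (c : Vec 1 ν δ) = (push hn z x : Vec 1 ν δ) :=
        eq_of_equiv_two _ _ (Quotient.exact hc)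
      have hd' : (d : Vec 1 ν δ) = (push hn z y : Vec 1 ν δ) :=
        eq_of_equiv_two _ _ (Quotient.exact hd)
      rw [hc', hd', ← push_pairing hn z x y] at hu
      exact ⟨x, y, rfl, rfl, (isUnit_iff_cast hn _).mpr hu⟩
    have fwd : ∀ x y : VertexRep n ν δ z, adjAux n ν δ z ⟦x⟧ ⟦y⟧ →
        adjAux 1 ν δ (ZMod.castHom (pow_dvd_pow 2 hn) (ZMod (2^1)) z)
          ⟦push hn z x⟧ ⟦push hn z y⟧ := by
      rintro x y ⟨c, d, hc, hd, hu⟩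
      refine ⟨push hn z c, push hn z d, ?_, ?_, ?_⟩
      · exact (hmk c).symm.trans (congrArg _ hc)
      · exact (hmk d).symm.trans (congrArg _ hd)
      · rw [← push_pairing hn z c d]
        exact (ZMod.castHom (pow_dvd_pow 2 hn) (ZMod (2^1))).isUnit_map hu
    constructor
    · rintro ⟨hne, hadj⟩
      rw [hmk a, hmk b]
      refine ⟨?_, ?_⟩
      · intro heq
        rcases hadj with ⟨x, y, hx, hy, hu⟩ | ⟨x, y, hx, hy, hu⟩
        · refine key x y ?_ hu
          have h1 : (⟦push hn z x⟧ : Vertex 1 ν δ _) = ⟦push hn z a⟧ :=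
            (hmk x).symm.trans ((congrArg _ hx).trans (hmk a))
          have h2 : (⟦push hn z y⟧ : Vertex 1 ν δ _) = ⟦push hn z b⟧ :=
            (hmk y).symm.trans ((congrArg _ hy).trans (hmk b))
          exact h1.trans (heq.trans h2.symm)
        · refine key x y ?_ hu
          have h1 : (⟦push hn z x⟧ : Vertex 1 ν δ _) = ⟦push hn z b⟧ :=
            (hmk x).symm.trans ((congrArg _ hx).trans (hmk b))
          have h2 : (⟦push hn z y⟧ : Vertex 1 ν δ _) = ⟦push hn z a⟧ :=
            (hmk y).symm.trans ((congrArg _ hy).trans (hmk a))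
          exact h1.trans (heq.symm.trans h2.symm)
      · rcases hadj with h | h
        · rcases h with ⟨x, y, hx, hy, hu⟩
          have h1 : (⟦push hn z x⟧ : Vertex 1 ν δ _) = ⟦push hn z a⟧ :=
            (hmk x).symm.trans ((congrArg _ hx).trans (hmk a))
          have h2 : (⟦push hn z y⟧ : Vertex 1 ν δ _) = ⟦push hn z b⟧ :=
            (hmk y).symm.trans ((congrArg _ hy).trans (hmk b))
          have h := fwd x y ⟨x, y, rfl, rfl, hu⟩
          rw [h1, h2] at h
          exact Or.inl h
        · rcases h with ⟨x, y, hx, hy, hu⟩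
          have h1 : (⟦push hn z x⟧ : Vertex 1 ν δ _) = ⟦push hn z b⟧ :=
            (hmk x).symm.trans ((congrArg _ hx).trans (hmk b))
          have h2 : (⟦push hn z y⟧ : Vertex 1 ν δ _) = ⟦push hn z a⟧ :=
            (hmk y).symm.trans ((congrArg _ hy).trans (hmk a))
          have h := fwd x y ⟨x, y, rfl, rfl, hu⟩
          rw [h1, h2] at h
          exact Or.inr h
    · rintro ⟨hne, hadj⟩
      refine ⟨fun h => hne (congrArg _ h), ?_⟩
      rw [hmk a, hmk b] at hadj
      rcases hadj with h | h
      · exact Or.inl (bwd a b h)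
      · exact Or.inr (bwd b a h)

end Ortho
end
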